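/- arXiv:math/9803094 — 10 statements merged into one kernel-verified Lean document; each statement's English description precedes it below -/
import Mathlib

section
/- Every elementary lattice simplex of dimension at most 2 is basic: if k ≤ 2, n_0,…,n_k ∈ ℤ^r are affinely independent and {y − n_0 : y ∈ conv({n_0,…,n_k})} ∩ N_s = {0, n_1−n_0, …, n_k−n_0}, then {n_1−n_0,…,n_k−n_0} is a ℤ-basis of N_s. -/
/-! Write a lattice point of `N_s` as `∑ cᵢ eᵢ` with `eᵢ = n (i+1) - n 0`. Subtracting
`∑ ⌊cᵢ⌋ eᵢ` gives a lattice point with coefficients `t = fract c ∈ [0,1)^k`. If `∑ tᵢ ≤ 1` it lies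
in `s - n 0`, so it is a vertex, which forces `t = 0`. Otherwise `∑ eᵢ` minus it is a lattice point
with coefficients `1 - t`, whose sum `k - ∑ tᵢ` lies strictly between `0` and `1` because `k ≤ 2`:
a point of `s - n 0` that is not a vertex. Hence `c` is integral. -/

noncomputable section

/-- coordinatewise cast of an integer vector into `ℝ^r` -/
def castZR {r : ℕ} (v : Fin r → ℤ) : Fin r → ℝ := fun j => (v j : ℝ)

open Finset

section FractionalPoints

variable {ι : Type*} [Fintype ι] [DecidableEq ι] {L : AddSubgroup (ι → ℝ)}

theorem AddSubgroup.eq_zero_of_mem_of_lt_one (hι : Fintype.card ι ≤ 2) (hone : 1 ∈ L)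
    (hvert : ∀ t ∈ L, 0 ≤ t → ∑ i, t i ≤ 1 → t = 0 ∨ ∃ j, t = Pi.single j 1)
    {t : ι → ℝ} (ht : t ∈ L) (h0 : 0 ≤ t) (h1 : ∀ i, t i < 1) : t = 0 := by
  by_cases hle : ∑ i, t i ≤ 1
  · rcases hvert t ht h0 hle with h | ⟨j, rfl⟩
    · exact h
    · simpa using h1 j
  push Not at hle
  have : Nonempty ι := by
    by_contra h
    simp [not_nonempty_iff.mp h] at hle
    linarith
  have hlt : ∑ i, t i < Fintype.card ι := by
    simpa using sum_lt_sum_of_nonempty univ_nonempty fun i _ => h1 i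
  have hsum : ∑ i, (1 - t) i = Fintype.card ι - ∑ i, t i := by
    simp [sum_sub_distrib]
  have hι' : (Fintype.card ι : ℝ) ≤ 2 := by exact_mod_cast hι
  rcases hvert (1 - t) (sub_mem hone ht) (fun i => by simpa using (h1 i).le) (by linarith)
    with h | ⟨j, h⟩ <;>
  · rw [h] at hsum
    simp at hsum
    linarith

theorem AddSubgroup.exists_intCast_eq_of_mem (hι : Fintype.card ι ≤ 2)
    (hint : ∀ m : ι → ℤ, (fun i => (m i : ℝ)) ∈ L)
    (hvert : ∀ t ∈ L, 0 ≤ t → ∑ i, t i ≤ 1 → t = 0 ∨ ∃ j, t = Pi.single j 1)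
    {c : ι → ℝ} (hc : c ∈ L) : ∃ m : ι → ℤ, c = fun i => (m i : ℝ) := by
  refine ⟨fun i => ⌊c i⌋, ?_⟩
  have hfract : (fun i => Int.fract (c i)) = 0 := by
    refine L.eq_zero_of_mem_of_lt_one hι (by convert hint 1; simp) hvert ?_
      (fun i => Int.fract_nonneg _) (fun i => Int.fract_lt_one _)
    convert sub_mem hc (hint fun i => ⌊c i⌋) using 1
    simp only [← Int.self_sub_floor, Pi.sub_def]
  funext i
  simpa [← Int.self_sub_floor, sub_eq_zero] using congrFun hfract i

end FractionalPoints

section LatticeCoefficients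

variable {r : ℕ} {ι : Type*}

def castZRLinearMap (r : ℕ) : (Fin r → ℤ) →ₗ[ℤ] Fin r → ℝ :=
  (Int.castAddHom ℝ).toIntLinearMap.compLeft (Fin r)

@[simp]
theorem castZRLinearMap_apply (v : Fin r → ℤ) : castZRLinearMap r v = castZR v := rfl

theorem castZR_injective : Function.Injective (castZR : (Fin r → ℤ) → Fin r → ℝ) :=
  fun _ _ h => funext fun j => Int.cast_injective (congrFun h j)

theorem castZR_sub (v w : Fin r → ℤ) : castZR (v - w) = castZR v - castZR w :=
  map_sub (castZRLinearMap r) v w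

theorem castZR_sum_zsmul [Fintype ι] (m : ι → ℤ) (e : ι → Fin r → ℤ) :
    castZR (∑ i, m i • e i) = ∑ i, (m i : ℝ) • castZR (e i) := by
  simp only [← castZRLinearMap_apply, map_sum, map_zsmul, Int.cast_smul_eq_zsmul]

def latticeCoeffs [Fintype ι] (e : ι → Fin r → ℤ) : AddSubgroup (ι → ℝ) :=
  (castZRLinearMap r).range.toAddSubgroup.comap
    (Fintype.linearCombination ℝ fun i => castZR (e i)).toAddMonoidHom

theorem mem_latticeCoeffs [Fintype ι] {e : ι → Fin r → ℤ} {c : ι → ℝ} :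
    c ∈ latticeCoeffs e ↔ ∃ v, castZR v = ∑ i, c i • castZR (e i) := by
  simp [latticeCoeffs, Fintype.linearCombination_apply]

theorem intCast_mem_latticeCoeffs [Fintype ι] (e : ι → Fin r → ℤ) (m : ι → ℤ) :
    (fun i => (m i : ℝ)) ∈ latticeCoeffs e :=
  mem_latticeCoeffs.2 ⟨∑ i, m i • e i, castZR_sum_zsmul m e⟩

theorem LinearIndependent.of_castZR {e : ι → Fin r → ℤ}
    (he : LinearIndependent ℝ fun i => castZR (e i)) : LinearIndependent ℤ e :=
  .of_comp (castZRLinearMap r) (he.restrict_scalars' ℤ)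

theorem castZR_mem_span_iff_of_latticeCoeffs [Fintype ι] {e : ι → Fin r → ℤ}
    (hcoeff : ∀ c ∈ latticeCoeffs e, ∃ m : ι → ℤ, c = fun i => (m i : ℝ)) (v : Fin r → ℤ) :
    castZR v ∈ Submodule.span ℝ (Set.range fun i => castZR (e i)) ↔
      v ∈ Submodule.span ℤ (Set.range e) := by
  simp only [Submodule.mem_span_range_iff_exists_fun]
  constructor
  · rintro ⟨c, hc⟩
    obtain ⟨m, rfl⟩ := hcoeff c (mem_latticeCoeffs.2 ⟨v, hc.symm⟩)
    exact ⟨m, castZR_injective (by rw [castZR_sum_zsmul, hc])⟩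
  · rintro ⟨m, rfl⟩
    exact ⟨_, (castZR_sum_zsmul m e).symm⟩

theorem eq_zero_or_eq_single_of_castZR_eq [Fintype ι] [DecidableEq ι]
    {e : ι → Fin r → ℤ} (he : LinearIndependent ℝ fun i => castZR (e i)) {t : ι → ℝ}
    {v : Fin r → ℤ} (hv : castZR v = ∑ i, t i • castZR (e i)) (hv' : v = 0 ∨ ∃ j, v = e j) :
    t = 0 ∨ ∃ j, t = Pi.single j 1 := by
  have hinj := he.fintypeLinearCombination_injective
  rw [← Fintype.linearCombination_apply] at hv
  rcases hv' with rfl | ⟨j, rfl⟩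
  · exact .inl (hinj (hv.symm.trans ((map_zero (castZRLinearMap r)).trans (map_zero _).symm)))
  · exact .inr ⟨j, hinj (by simpa [Fintype.linearCombination_apply_single] using hv.symm)⟩

end LatticeCoefficients

theorem add_sum_smul_sub_mem_convexHull {E : Type*} [AddCommGroup E] [Module ℝ E] {k : ℕ}
    (p : Fin (k + 1) → E) {t : Fin k → ℝ} (h0 : 0 ≤ t) (h1 : ∑ i, t i ≤ 1) :
    ∑ i, t i • (p i.succ - p 0) + p 0 ∈ convexHull ℝ (Set.range p) := by
  set w : Fin (k + 1) → ℝ := Fin.cons (1 - ∑ i, t i) t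
  have hw : ∑ j, w j • p j = ∑ i, t i • (p i.succ - p 0) + p 0 := by
    simp only [w, Fin.sum_univ_succ, Fin.cons_zero, Fin.cons_succ, smul_sub, sum_sub_distrib,
      ← sum_smul]
    module
  rw [← hw]
  refine (convex_convexHull ℝ _).sum_mem (fun j _ => ?_) ?_
    (fun j _ => subset_convexHull ℝ _ ⟨j, rfl⟩)
  · cases j using Fin.cases with
    | zero => simpa [w] using h1
    | succ i => simpa [w] using h0 i
  · simp [w, Fin.sum_univ_succ]

theorem AffineIndependent.linearIndependent_sub_zero {R E : Type*} [Ring R] [AddCommGroup E]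
    [Module R E] {k : ℕ} {p : Fin (k + 1) → E} (hp : AffineIndependent R p) :
    LinearIndependent R fun i : Fin k => p i.succ - p 0 :=
  ((affineIndependent_iff_linearIndependent_vsub R p 0).1 hp).comp
    (fun i => ⟨i.succ, i.succ_ne_zero⟩) fun _ _ h => Fin.succ_injective _ (congrArg Subtype.val h)

theorem AffineIndependent.linearIndependent_castZR_sub_zero {r k : ℕ}
    {n : Fin (k + 1) → Fin r → ℤ} (haff : AffineIndependent ℝ fun i => castZR (n i)) :
    LinearIndependent ℝ fun i : Fin k => castZR (n i.succ - n 0) := by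
  simpa only [castZR_sub] using haff.linearIndependent_sub_zero

theorem eq_zero_or_eq_single_of_mem_latticeCoeffs {r k : ℕ} {n : Fin (k + 1) → Fin r → ℤ}
    (haff : AffineIndependent ℝ fun i => castZR (n i))
    (helem :
      {v : Fin r → ℤ |
          castZR v ∈ Submodule.span ℝ
            (Set.range (fun i : Fin k => castZR (n i.succ - n 0))) ∧
          castZR v + castZR (n 0) ∈
            convexHull ℝ (Set.range (fun i => castZR (n i)))}
        = Set.range (fun i : Fin (k + 1) => n i - n 0))
    {t : Fin k → ℝ} (ht : t ∈ latticeCoeffs fun i => n i.succ - n 0) (h0 : 0 ≤ t)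
    (h1 : ∑ i, t i ≤ 1) : t = 0 ∨ ∃ j, t = Pi.single j 1 := by
  obtain ⟨v, hv⟩ := mem_latticeCoeffs.1 ht
  have hmem : v ∈ Set.range fun i : Fin (k + 1) => n i - n 0 := by
    rw [← helem]
    refine ⟨hv ▸ Submodule.sum_mem _ fun i _ =>
      Submodule.smul_mem _ _ (Submodule.subset_span ⟨i, rfl⟩), ?_⟩
    simpa only [hv, castZR_sub] using add_sum_smul_sub_mem_convexHull _ h0 h1
  refine eq_zero_or_eq_single_of_castZR_eq haff.linearIndependent_castZR_sub_zero hv ?_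
  obtain ⟨j, rfl⟩ := hmem
  cases j using Fin.cases with
  | zero => exact .inl (sub_self _)
  | succ i => exact .inr ⟨i, rfl⟩

theorem elementary_simplex_dim_le_two_is_basic_general
    (r k : ℕ) (hk2 : k ≤ 2)
    (n : Fin (k + 1) → (Fin r → ℤ))
    (haff : AffineIndependent ℝ (fun i => castZR (n i)))
    (helem :
      {v : Fin r → ℤ |
          castZR v ∈ Submodule.span ℝ
            (Set.range (fun i : Fin k => castZR (n i.succ - n 0))) ∧
          castZR v + castZR (n 0) ∈
            convexHull ℝ (Set.range (fun i => castZR (n i)))}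
        = Set.range (fun i : Fin (k + 1) => n i - n 0)) :
    LinearIndependent ℤ (fun i : Fin k => n i.succ - n 0) ∧
    ∀ v : Fin r → ℤ,
      castZR v ∈ Submodule.span ℝ
          (Set.range (fun i : Fin k => castZR (n i.succ - n 0)))
        ↔ v ∈ Submodule.span ℤ (Set.range (fun i : Fin k => n i.succ - n 0)) := by
  refine ⟨haff.linearIndependent_castZR_sub_zero.of_castZR,
    castZR_mem_span_iff_of_latticeCoeffs fun c hc => ?_⟩
  exact AddSubgroup.exists_intCast_eq_of_mem (by simpa using hk2) (intCast_mem_latticeCoeffs _)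
    (fun t ht => eq_zero_or_eq_single_of_mem_latticeCoeffs haff helem ht) hc

/-- **Elementary lattice simplices of dimension at most 2 are basic.**
If `k ≤ 2`, `n 0, …, n k ∈ ℤ^r` are affinely independent and
`{y − n 0 : y ∈ conv({n 0,…,n k})} ∩ N_s = {0, n 1 − n 0, …, n k − n 0}`
(where `N_s = span_ℝ({n i − n 0}) ∩ ℤ^r`), then the differences
`n 1 − n 0, …, n k − n 0` form a `ℤ`-basis of `N_s`. -/
theorem elementary_simplex_dim_le_two_is_basic
    (r k : ℕ) (hr : 1 ≤ r) (hk2 : k ≤ 2) (hk : k ≤ r)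
    (n : Fin (k + 1) → (Fin r → ℤ))
    (haff : AffineIndependent ℝ (fun i => castZR (n i)))
    (helem :
      {v : Fin r → ℤ |
          castZR v ∈ Submodule.span ℝ
            (Set.range (fun i : Fin k => castZR (n i.succ - n 0))) ∧
          castZR v + castZR (n 0) ∈
            convexHull ℝ (Set.range (fun i => castZR (n i)))}
        = Set.range (fun i : Fin (k + 1) => n i - n 0)) :
    LinearIndependent ℤ (fun i : Fin k => n i.succ - n 0) ∧
    ∀ v : Fin r → ℤ,
      castZR v ∈ Submodule.span ℝ
          (Set.range (fun i : Fin k => castZR (n i.succ - n 0)))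
        ↔ v ∈ Submodule.span ℤ (Set.range (fun i : Fin k => n i.succ - n 0)) :=
  elementary_simplex_dim_le_two_is_basic_general r k hk2 n haff helem
end
end

section
/- (Necessary existence criterion.) Assume that Σ_{i=1}^r y_i ∈ ℤ for every y = (y_1,…,y_r) ∈ N (the Gorenstein condition). If there is a finite family B_1,…,B_m of r-element subsets of s_G ∩ N, each of which is a ℤ-basis of N, such that σ0 = pos(B_1) ∪ … ∪ pos(B_m) (as happens whenever the junior simplex admits a basic triangulation), then Hlb_N(σ0) = s_G ∩ N, i.e. every element of the Hilbert basis of σ0 is either a junior lattice point or one of e_1,…,e_r. -/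
noncomputable section

/-- coordinatewise cast of a rational vector into `ℝ^r` -/
def castQR {r : ℕ} (v : Fin r → ℚ) : Fin r → ℝ := fun i => (v i : ℝ)

/-- `pos(B)` : all linear combinations of the elements of the finite set `B ⊆ ℚ^r`
with nonnegative real coefficients. -/
def posR {r : ℕ} (B : Finset (Fin r → ℚ)) : Set (Fin r → ℝ) :=
  {y | ∃ c : (Fin r → ℚ) → ℝ, (∀ b, 0 ≤ c b) ∧ y = ∑ b ∈ B, c b • castQR b}

/-!
A basis `B_i` of `N` is also a basis of `ℝ^r`, so the real coefficients of a point of `N` lying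
in `pos(B_i)` are its integer coordinates in `B_i`, hence nonnegative. So every point of `σ0 ∩ N` is a sum
of junior basis vectors, and an indecomposable one must be a single such vector.
Conversely, by the Gorenstein condition every nonzero element of `σ0 ∩ N` has coordinate sum at
least `1`, so an element of coordinate sum `1` cannot split.
-/

theorem AddSubmonoid.eq_zero_or_mem_or_exists_add_of_mem_closure {M : Type*} [AddMonoid M]
    {S : Set M} {x : M} (hx : x ∈ closure S) :
    x = 0 ∨ x ∈ S ∨ ∃ a ∈ closure S, ∃ b ∈ closure S, a ≠ 0 ∧ b ≠ 0 ∧ x = a + b := by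
  induction hx using closure_induction with
  | mem x hx => exact .inr (.inl hx)
  | zero => exact .inl rfl
  | add a b ha hb iha ihb =>
    rcases eq_or_ne a 0 with rfl | ha0
    · simpa using ihb
    rcases eq_or_ne b 0 with rfl | hb0
    · simpa using iha
    exact .inr (.inr ⟨a, ha, b, hb, ha0, hb0, rfl⟩)

theorem one_le_sum_of_nonneg_of_ne_zero {ι K : Type*} [Fintype ι] [Ring K] [LinearOrder K]
    [IsStrictOrderedRing K] {x : ι → K} (hx : 0 ≤ x) (hx0 : x ≠ 0)
    (hint : ∃ z : ℤ, ∑ i, x i = z) : 1 ≤ ∑ i, x i := by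
  obtain ⟨z, hz⟩ := hint
  have hpos : 0 < ∑ i, x i := lt_of_le_of_ne (Fintype.sum_nonneg hx) fun h =>
    hx0 ((Fintype.sum_eq_zero_iff_of_nonneg hx).1 h.symm)
  rw [hz] at hpos ⊢
  exact_mod_cast (Int.cast_pos.1 hpos : 0 < z)

theorem castQR_eq_algebraMap_comp {r : ℕ} (v : Fin r → ℚ) : castQR v = algebraMap ℚ ℝ ∘ v := by
  funext i; simp [castQR]

theorem castQR_sum_zsmul {r : ℕ} (S : Finset (Fin r → ℚ)) (f : (Fin r → ℚ) → ℤ) :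
    castQR (∑ b ∈ S, f b • b) = ∑ b ∈ S, (f b : ℝ) • castQR b := by
  funext j
  simp [castQR, Finset.sum_apply]

theorem LinearIndependent.castQR {r : ℕ} {ι : Type*} {v : ι → Fin r → ℚ}
    (hv : LinearIndependent ℤ v) : LinearIndependent ℝ (fun i => castQR (v i)) := by
  simp only [castQR_eq_algebraMap_comp]
  exact linearIndependent_algebraMap_comp_iff.2 ((LinearIndependent.iff_fractionRing ℤ ℚ).1 hv)

theorem mem_closure_of_mem_span_of_mem_posR {r : ℕ} {S : Finset (Fin r → ℚ)}
    (hS : LinearIndependent ℤ (fun b : (S : Set (Fin r → ℚ)) => (b : Fin r → ℚ)))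
    {x : Fin r → ℚ} (hspan : x ∈ Submodule.span ℤ (S : Set (Fin r → ℚ)))
    (hpos : castQR x ∈ posR S) : x ∈ AddSubmonoid.closure (S : Set (Fin r → ℚ)) := by
  obtain ⟨f, -, rfl⟩ := Submodule.mem_span_finset.1 hspan
  obtain ⟨c, hc0, hc⟩ := hpos
  have hcf : ∀ b ∈ S, c b = f b := by
    have hzero : ∑ b : (S : Set (Fin r → ℚ)), (c b - f b) • castQR (b : Fin r → ℚ) = 0 := by
      rw [Finset.sum_finset_coe (fun b => (c b - f b) • castQR b)]
      simp only [sub_smul, Finset.sum_sub_distrib, ← hc, castQR_sum_zsmul, sub_self]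
    intro b hb
    exact sub_eq_zero.1 (Fintype.linearIndependent_iff.1 hS.castQR _ hzero ⟨b, hb⟩)
  refine AddSubmonoid.sum_mem _ fun b hb => ?_
  have hfb : 0 ≤ f b := by exact_mod_cast hcf b hb ▸ hc0 b
  rw [← Int.toNat_of_nonneg hfb, natCast_zsmul]
  exact AddSubmonoid.nsmul_mem _ (AddSubmonoid.subset_closure hb) _

theorem hilbert_basis_eq_junior_of_basic_cover_general
    (r : ℕ)
    (N : AddSubgroup (Fin r → ℚ))
    (hGor : ∀ x ∈ N, ∃ z : ℤ, ∑ i, x i = (z : ℚ))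
    (hexists : ∃ (m : ℕ) (B : Fin m → Finset (Fin r → ℚ)),
        (∀ i, (B i).card = r) ∧
        (∀ i, ∀ b ∈ B i, b ∈ N ∧ (∀ j, 0 ≤ b j) ∧ ∑ j, b j = 1) ∧
        (∀ i, LinearIndependent ℤ
            (fun b : ((B i : Set (Fin r → ℚ))) => (b : Fin r → ℚ))) ∧
        (∀ i, (Submodule.span ℤ ((B i : Set (Fin r → ℚ))) : Set (Fin r → ℚ))
            = (N : Set (Fin r → ℚ))) ∧
        {y : Fin r → ℝ | ∀ j, 0 ≤ y j} = ⋃ i, posR (B i)) :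
    {x : Fin r → ℚ | x ∈ N ∧ (∀ j, 0 ≤ x j) ∧ x ≠ 0 ∧
        ¬ ∃ a b : Fin r → ℚ, a ∈ N ∧ (∀ j, 0 ≤ a j) ∧ a ≠ 0 ∧
            b ∈ N ∧ (∀ j, 0 ≤ b j) ∧ b ≠ 0 ∧ x = a + b}
      = {x : Fin r → ℚ | x ∈ N ∧ (∀ j, 0 ≤ x j) ∧ ∑ j, x j = 1} := by
  obtain ⟨m, B, -, hjun, hli, hspan, hcover⟩ := hexists
  ext x
  constructor
  · rintro ⟨hxN, hx0, hxne, hind⟩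
    obtain ⟨i, hxi⟩ : ∃ i, castQR x ∈ posR (B i) := by
      rw [← Set.mem_iUnion, ← hcover]
      exact fun j => Rat.cast_nonneg.2 (hx0 j)
    have hcl : x ∈ AddSubmonoid.closure (B i : Set (Fin r → ℚ)) :=
      mem_closure_of_mem_span_of_mem_posR (hli i)
        (by rw [← SetLike.mem_coe, hspan i]; exact hxN) hxi
    have hle : AddSubmonoid.closure (B i : Set (Fin r → ℚ)) ≤
        N.toAddSubmonoid ⊓ AddSubmonoid.nonneg _ :=
      AddSubmonoid.closure_le.2 fun b hb => ⟨(hjun i b hb).1, (hjun i b hb).2.1⟩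
    rcases AddSubmonoid.eq_zero_or_mem_or_exists_add_of_mem_closure hcl with
      h0 | hxB | ⟨a, ha, b, hb, ha0, hb0, rfl⟩
    · exact absurd h0 hxne
    · exact hjun i x hxB
    · exact absurd ⟨a, b, (hle ha).1, (hle ha).2, ha0, (hle hb).1, (hle hb).2, hb0, rfl⟩ hind
  · rintro ⟨hxN, hx0, hx1⟩
    refine ⟨hxN, hx0, fun h => by simp [h] at hx1, ?_⟩
    rintro ⟨a, b, haN, ha0, hane, hbN, hb0, hbne, rfl⟩
    have ha1 := one_le_sum_of_nonneg_of_ne_zero ha0 hane (hGor a haN)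
    have hb1 := one_le_sum_of_nonneg_of_ne_zero hb0 hbne (hGor b hbN)
    simp only [Pi.add_apply, Finset.sum_add_distrib] at hx1
    linarith

/-- **Necessary existence criterion.** Assume the Gorenstein condition (all
coordinate sums of lattice vectors are integers).  If the positive orthant is
covered by cones over `r`-element subsets of `s_G ∩ N` which are `ℤ`-bases of
`N` (as happens whenever the junior simplex admits a basic triangulation),
then the Hilbert basis of `σ0` w.r.t. `N` equals `s_G ∩ N`. -/
theorem hilbert_basis_eq_junior_of_basic_cover
    (r : ℕ) (hr : 2 ≤ r)
    (N : AddSubgroup (Fin r → ℚ))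
    (hZN : ∀ v : Fin r → ℤ, (fun i => (v i : ℚ)) ∈ N)
    (hNd : ∃ d : ℕ, 0 < d ∧ ∀ x ∈ N, ∀ i, ∃ z : ℤ, (d : ℚ) * x i = (z : ℚ))
    (hGor : ∀ x ∈ N, ∃ z : ℤ, ∑ i, x i = (z : ℚ))
    (hexists : ∃ (m : ℕ) (B : Fin m → Finset (Fin r → ℚ)),
        (∀ i, (B i).card = r) ∧
        (∀ i, ∀ b ∈ B i, b ∈ N ∧ (∀ j, 0 ≤ b j) ∧ ∑ j, b j = 1) ∧
        (∀ i, LinearIndependent ℤ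
            (fun b : ((B i : Set (Fin r → ℚ))) => (b : Fin r → ℚ))) ∧
        (∀ i, (Submodule.span ℤ ((B i : Set (Fin r → ℚ))) : Set (Fin r → ℚ))
            = (N : Set (Fin r → ℚ))) ∧
        {y : Fin r → ℝ | ∀ j, 0 ≤ y j} = ⋃ i, posR (B i)) :
    {x : Fin r → ℚ | x ∈ N ∧ (∀ j, 0 ≤ x j) ∧ x ≠ 0 ∧
        ¬ ∃ a b : Fin r → ℚ, a ∈ N ∧ (∀ j, 0 ≤ a j) ∧ a ≠ 0 ∧
            b ∈ N ∧ (∀ j, 0 ≤ b j) ∧ b ≠ 0 ∧ x = a + b}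
      = {x : Fin r → ℚ | x ∈ N ∧ (∀ j, 0 ≤ x j) ∧ ∑ j, x j = 1} :=
  hilbert_basis_eq_junior_of_basic_cover_general r N hGor hexists
end
end

section
/- The lattice points of the junior simplex of the singularity of type (1/l)(1,…,1,l−(r−1)) are exactly the r unit vectors together with the ν collinear points n^(j): s_G ∩ N = {e_1,…,e_r} ∪ {n^(j) : 1 ≤ j ≤ ν}, where n^(j) = (1/l)(j,…,j,l−j(r−1)). -/
noncomputable section

/-- the generator `(1/l)(1,…,1,l−(r−1))` of the lattice of weights -/
def wgt (l r : ℕ) : Fin r → ℚ :=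
  fun i => (if (i : ℕ) + 1 = r then (l : ℚ) - ((r : ℚ) - 1) else 1) / l

/-- membership in the lattice `N = ℤ^r + ℤ·(1/l)(1,…,1,l−(r−1))` -/
def memN (l r : ℕ) (v : Fin r → ℚ) : Prop :=
  ∃ (a : Fin r → ℤ) (c : ℤ), v = (fun i => (a i : ℚ)) + c • wgt l r

/-- the point `n⁽ʲ⁾ = (1/l)(j,…,j,l−j(r−1))` -/
def nj (l r j : ℕ) : Fin r → ℚ :=
  fun i => (if (i : ℕ) + 1 = r then (l : ℚ) - (j : ℚ) * ((r : ℚ) - 1) else (j : ℚ)) / l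


/-! Reducing the coefficient of the generator modulo `l`, a point of `N` is
`b + (j/l)(1,…,1,l−(r−1))` with `b` integral and `0 ≤ j < l`. If `j = 0` the point is integral,
hence a unit vector. Otherwise each of the first `r − 1` coordinates is `b_k + j/l ∈ [0, 1]`
with `0 < j/l < 1`, which forces `b_k = 0`; the coordinate sum then pins the last coordinate
to `(l − j(r−1))/l`, and its nonnegativity is `j ≤ ν`. -/

open Finset

lemma Int.eq_zero_of_nonneg_add_of_add_le_one {α : Type*} [Field α] [LinearOrder α]
    [IsStrictOrderedRing α] {z : ℤ} {t : α} (ht0 : 0 < t) (ht1 : t < 1)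
    (h0 : 0 ≤ z + t) (h1 : z + t ≤ 1) : z = 0 := by
  have hlt : (z : α) < 1 := by linarith
  have hgt : (-1 : α) < z := by linarith
  have : z < 1 := by exact_mod_cast hlt
  have : -1 < z := by exact_mod_cast hgt
  omega

lemma Int.exists_eq_single_of_nonneg_of_sum_eq_one {ι : Type*} [Fintype ι] [DecidableEq ι]
    {b : ι → ℤ} (h0 : ∀ i, 0 ≤ b i) (h1 : ∑ i, b i = 1) : ∃ i, b = Pi.single i 1 := by
  obtain ⟨i, -, hi⟩ : ∃ i ∈ univ, b i ≠ 0 := exists_ne_zero_of_sum_ne_zero (by omega)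
  have hbi : b i = 1 := by
    have := h1 ▸ single_le_sum (fun k _ => h0 k) (mem_univ i)
    have := h0 i
    omega
  have hrest : ∑ k ∈ {i}ᶜ, b k = 0 := by
    rw [Fintype.sum_eq_add_sum_compl i, hbi] at h1
    omega
  refine ⟨i, funext fun k => ?_⟩
  rcases eq_or_ne k i with rfl | hk
  · simp [hbi]
  · rw [Pi.single_eq_of_ne hk]
    exact (sum_eq_zero_iff_of_nonneg fun k _ => h0 k).1 hrest k (by simpa using hk)

section LastCoordinate

variable (l n j : ℕ)

@[simp] lemma wgt_castSucc (i : Fin n) : wgt l (n + 1) i.castSucc = 1 / l := by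
  simp [wgt, i.isLt.ne]

@[simp] lemma wgt_last : wgt l (n + 1) (Fin.last n) = (l - n) / l := by
  simp [wgt]

@[simp] lemma nj_castSucc (i : Fin n) : nj l (n + 1) j i.castSucc = j / l := by
  simp [nj, i.isLt.ne]

@[simp] lemma nj_last : nj l (n + 1) j (Fin.last n) = (l - j * n) / l := by
  simp [nj]

end LastCoordinate

lemma sum_nj {l : ℕ} (hl : l ≠ 0) (n j : ℕ) : ∑ k, nj l (n + 1) j k = 1 := by
  simp only [Fin.sum_univ_castSucc, nj_castSucc, sum_const, card_univ, Fintype.card_fin,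
    nsmul_eq_mul, nj_last]
  field_simp
  ring

lemma nj_nonneg {l n j : ℕ} (hjn : j * n ≤ l) (k : Fin (n + 1)) : 0 ≤ nj l (n + 1) j k := by
  have : (j : ℚ) * n ≤ l := by exact_mod_cast hjn
  cases k using Fin.lastCases with
  | last => simp only [nj_last]; apply div_nonneg <;> linarith [(l.cast_nonneg : (0 : ℚ) ≤ l)]
  | cast i => simp only [nj_castSucc]; positivity

lemma memN_single (l r : ℕ) (i : Fin r) : memN l r (Pi.single i 1) :=
  ⟨Pi.single i 1, 0, by ext k; by_cases hk : k = i <;> simp [Pi.single_apply, hk]⟩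

lemma memN_nj {l : ℕ} (hl : l ≠ 0) (n j : ℕ) : memN l (n + 1) (nj l (n + 1) j) := by
  refine ⟨Pi.single (Fin.last n) (1 - j), j, funext fun k => ?_⟩
  rw [Pi.add_apply, Pi.smul_apply, zsmul_eq_mul]
  cases k using Fin.lastCases with
  | last =>
    simp only [nj_last, wgt_last, Pi.single_eq_same]
    push_cast
    field_simp
    ring
  | cast i =>
    simp only [nj_castSucc, wgt_castSucc, Pi.single_eq_of_ne (Fin.castSucc_ne_last i)]
    push_cast
    ring

lemma exists_intCast_eq_natCast_mul_wgt {l : ℕ} (hl : l ≠ 0) (r : ℕ) (k : Fin r) :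
    ∃ z : ℤ, (l : ℚ) * wgt l r k = z := by
  refine ⟨if (k : ℕ) + 1 = r then l - r + 1 else 1, ?_⟩
  unfold wgt
  split_ifs <;> push_cast <;> field_simp
  ring

lemma memN.exists_int_add_natCast_mul_wgt {l r : ℕ} (hl : 0 < l) {v : Fin r → ℚ}
    (hv : memN l r v) :
    ∃ (b : Fin r → ℤ) (j : ℕ), j < l ∧ ∀ k, v k = b k + j * wgt l r k := by
  obtain ⟨a, c, rfl⟩ := hv
  choose z hz using exists_intCast_eq_natCast_mul_wgt hl.ne' r
  have hl' : (0 : ℤ) < l := by exact_mod_cast hl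
  obtain ⟨j, hj⟩ : ∃ j : ℕ, (j : ℤ) = c % l :=
    ⟨_, Int.toNat_of_nonneg (Int.emod_nonneg c hl'.ne')⟩
  have hjQ : (j : ℚ) = c - l * (c / l : ℤ) := by
    rw [← Int.cast_natCast, hj, Int.emod_def]
    push_cast
    ring
  refine ⟨fun k => a k + c / l * z k, j, by have := Int.emod_lt_of_pos c hl'; omega, fun k => ?_⟩
  simp only [Pi.add_apply, zsmul_eq_mul, Pi.mul_apply, Pi.intCast_apply, hjQ]
  push_cast
  rw [← hz k]
  ring

lemma eq_nj_of_nonneg_of_sum_eq_one {l n j : ℕ} (hj : 0 < j) (hjl : j < l)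
    {v : Fin (n + 1) → ℚ} {b : Fin (n + 1) → ℤ} (hvb : ∀ k, v k = b k + j * wgt l (n + 1) k)
    (hv0 : ∀ k, 0 ≤ v k) (hv1 : ∑ k, v k = 1) : j * n ≤ l ∧ v = nj l (n + 1) j := by
  have hl : (0 : ℚ) < l := by exact_mod_cast hj.trans hjl
  have hjl' : (j : ℚ) / l < 1 := (div_lt_one hl).2 (by exact_mod_cast hjl)
  have hj' : (0 : ℚ) < j / l := by positivity
  have hcast : ∀ i : Fin n, v i.castSucc = j / l := by
    intro i
    have hvi := hvb i.castSucc
    rw [wgt_castSucc, mul_one_div] at hvi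
    have hb : b i.castSucc = 0 := Int.eq_zero_of_nonneg_add_of_add_le_one hj' hjl'
      (hvi ▸ hv0 _) (hvi ▸ hv1 ▸ single_le_sum (fun k _ => hv0 k) (mem_univ _))
    simpa [hb] using hvi
  have hlast : v (Fin.last n) = (l - j * n) / l := by
    rw [Fin.sum_univ_castSucc] at hv1
    simp only [hcast, sum_const, card_univ, Fintype.card_fin, nsmul_eq_mul] at hv1
    rw [eq_div_iff hl.ne']
    field_simp at hv1
    linarith
  constructor
  · have := (le_div_iff₀ hl).1 (hlast ▸ hv0 (Fin.last n))
    have : (j : ℚ) * n ≤ l := by linarith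
    exact_mod_cast this
  · funext k
    cases k using Fin.lastCases with
    | last => rw [hlast, nj_last]
    | cast i => rw [hcast, nj_castSucc]

/-- The lattice points of the junior simplex of the singularity of type
`(1/l)(1,…,1,l−(r−1))` are exactly the `r` unit vectors together with the
`ν = ⌊l/(r−1)⌋` collinear points `n⁽ʲ⁾`. -/
theorem junior_lattice_points (l r : ℕ) (hr : 2 ≤ r) (hl : r ≤ l) :
    {v : Fin r → ℚ | memN l r v ∧ (∀ i, 0 ≤ v i) ∧ ∑ i, v i = 1}
      = (Set.range fun i : Fin r => (Pi.single i 1 : Fin r → ℚ))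
        ∪ {v | ∃ j : ℕ, 1 ≤ j ∧ j ≤ l / (r - 1) ∧ v = nj l r j} := by
  obtain ⟨n, rfl⟩ : ∃ n, r = n + 1 := ⟨r - 1, by omega⟩
  have hl0 : 0 < l := by omega
  simp only [Nat.add_sub_cancel, Nat.le_div_iff_mul_le (by omega : 0 < n)]
  ext v
  constructor
  · rintro ⟨hv, hv0, hv1⟩
    obtain ⟨b, j, hjl, hvb⟩ := hv.exists_int_add_natCast_mul_wgt hl0
    rcases j.eq_zero_or_pos with rfl | hj
    · have hvb : v = fun k => (b k : ℚ) := by simpa using funext hvb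
      simp only [hvb] at hv0 hv1
      obtain ⟨i, rfl⟩ := Int.exists_eq_single_of_nonneg_of_sum_eq_one
        (fun k => by exact_mod_cast hv0 k) (by exact_mod_cast hv1)
      exact .inl ⟨i, by ext k; by_cases hk : k = i <;> simp [hvb, hk]⟩
    · obtain ⟨hjn, rfl⟩ := eq_nj_of_nonneg_of_sum_eq_one hj hjl hvb hv0 hv1
      exact .inr ⟨j, hj, hjn, rfl⟩
  · rintro (⟨i, rfl⟩ | ⟨j, -, hjn, rfl⟩)
    · exact ⟨memN_single l _ i, fun k => by by_cases hk : k = i <;> simp [hk],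
        by simp⟩
    · exact ⟨memN_nj hl0.ne' n j, nj_nonneg hjn, sum_nj hl0.ne' n j⟩
end
end

section
/- For every j with 1 ≤ j ≤ ν and every (r−2)-element subset S ⊆ {1,…,r−1}, the r-element set B(j;S) = {n^(j−1), n^(j)} ∪ {e_ξ : ξ ∈ S} is a ℤ-basis of the lattice N; equivalently each simplex conv(B(j;S)) of the canonical triangulation of the junior simplex is basic, having |det(n^(j−1), n^(j), e_{ξ_1},…,e_{ξ_{r−2}})| = 1/l = det(N). -/
noncomputable section

/-!
From the two consecutive points one recovers `e_r = j n⁽ʲ⁻¹⁾ - (j - 1) n⁽ʲ⁾` and then the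
generator `w = n⁽ʲ⁾ - n⁽ʲ⁻¹⁾ + e_r` of `N`. Together with the `e_ξ`, `ξ ∈ S`, these give every
unit vector except one, `e_k`, which is recovered from `l w = (1, …, 1) + (l - r) e_r`. Hence
`B(j; S)` spans `N` over `ℤ`; since `N` has rank `r` and `B(j; S)` has at most `r` elements,
it is a basis.
-/

theorem Submodule.mem_of_sum_mem_of_forall_ne {R M ι : Type*} [Ring R] [AddCommGroup M]
    [Module R M] [Fintype ι] [DecidableEq ι] {P : Submodule R M} {f : ι → M}
    (hsum : ∑ i, f i ∈ P) (k : ι) (hf : ∀ i ≠ k, f i ∈ P) : f k ∈ P := by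
  rw [← Finset.add_sum_erase _ _ (Finset.mem_univ k)] at hsum
  exact (P.add_mem_iff_left (P.sum_mem fun i hi => hf i (Finset.ne_of_mem_erase hi))).1 hsum

theorem Finset.exists_erase_subset_of_card_le {ι : Type*} [Fintype ι] [Nonempty ι] [DecidableEq ι]
    {T : Finset ι} (hT : Fintype.card ι ≤ T.card + 1) : ∃ k, Finset.univ.erase k ⊆ T := by
  obtain ⟨k, hk⟩ := Finset.card_le_one_iff_subset_singleton.1
    (show Tᶜ.card ≤ 1 by rw [Finset.card_compl]; omega)
  refine ⟨k, fun i hi => ?_⟩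
  by_contra hiT
  exact Finset.ne_of_mem_erase hi (Finset.mem_singleton.1 (hk (Finset.mem_compl.2 hiT)))

theorem Finset.card_eq_finrank_and_linearIndependent {K V : Type*} [DivisionRing K]
    [AddCommGroup V] [Module K V] [FiniteDimensional K V] {B : Finset V}
    (hcard : B.card ≤ Module.finrank K V) (hspan : Submodule.span K (B : Set V) = ⊤) :
    B.card = Module.finrank K V ∧ LinearIndependent K (fun v : (B : Set V) => (v : V)) := by
  have hle : Module.finrank K V ≤ B.card := by
    have := finrank_span_finset_le_card (R := K) B
    rwa [Set.finrank, hspan, finrank_top] at this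
  have heq : B.card = Module.finrank K V := le_antisymm hcard hle
  refine ⟨heq, linearIndependent_of_top_le_span_of_card_eq_finrank (by simp [hspan]) ?_⟩
  simpa using heq

theorem span_rat_eq_top_of_single_mem_span_int {ι : Type*} [Fintype ι] [DecidableEq ι]
    {s : Set (ι → ℚ)} (h : ∀ i, Pi.single i 1 ∈ Submodule.span ℤ s) :
    Submodule.span ℚ s = ⊤ := by
  rw [eq_top_iff, ← (Pi.basisFun ℚ ι).span_eq, Submodule.span_le]
  rintro _ ⟨i, rfl⟩
  exact Submodule.span_subset_span ℤ ℚ s (by simpa using h i)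

def latticeN (l r : ℕ) : Submodule ℤ (Fin r → ℚ) where
  carrier := {v | memN l r v}
  add_mem' := by
    rintro v w ⟨a, c, rfl⟩ ⟨a', c', rfl⟩
    exact ⟨a + a', c + c', by funext i; simp; ring⟩
  zero_mem' := ⟨0, 0, by funext i; simp⟩
  smul_mem' := by
    rintro m v ⟨a, c, rfl⟩
    exact ⟨m • a, m * c, by funext i; simp; ring⟩

section

variable {l n : ℕ}

theorem wgt_apply (i : Fin (n + 1)) :
    wgt l (n + 1) i = (if i = Fin.last n then (l : ℚ) - n else 1) / l := by
  simp [wgt, Fin.ext_iff]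

theorem nj_apply (m : ℕ) (i : Fin (n + 1)) :
    nj l (n + 1) m i = (if i = Fin.last n then (l : ℚ) - m * n else m) / l := by
  simp [nj, Fin.ext_iff]

theorem single_last_eq_zsmul_nj_sub_zsmul_nj (hl : (l : ℚ) ≠ 0) (m : ℕ) :
    Pi.single (Fin.last n) 1 = ((m : ℤ) + 1) • nj l (n + 1) m - (m : ℤ) • nj l (n + 1) (m + 1) := by
  funext i
  rcases eq_or_ne i (Fin.last n) with rfl | hi
  · simp [nj_apply]
    field_simp
    ring
  · simp [nj_apply, hi]
    field_simp
    ring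

theorem wgt_eq_nj_succ_sub_nj_add_single_last (hl : (l : ℚ) ≠ 0) (m : ℕ) :
    wgt l (n + 1) = nj l (n + 1) (m + 1) - nj l (n + 1) m + Pi.single (Fin.last n) 1 := by
  funext i
  rcases eq_or_ne i (Fin.last n) with rfl | hi
  · simp [nj_apply, wgt_apply]
    field_simp
    ring
  · simp [nj_apply, wgt_apply, hi]
    field_simp
    ring

theorem nj_eq_zsmul_wgt_add_zsmul_single_last (hl : (l : ℚ) ≠ 0) (m : ℕ) :
    nj l (n + 1) m = (m : ℤ) • wgt l (n + 1) + (1 - m : ℤ) • Pi.single (Fin.last n) 1 := by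
  funext i
  rcases eq_or_ne i (Fin.last n) with rfl | hi
  · simp [nj_apply, wgt_apply]
    field_simp
    ring
  · simp [nj_apply, wgt_apply, hi]
    field_simp

theorem one_eq_zsmul_wgt_sub_zsmul_single_last (hl : (l : ℚ) ≠ 0) :
    (1 : Fin (n + 1) → ℚ) =
      (l : ℤ) • wgt l (n + 1) - ((l : ℤ) - (n + 1)) • Pi.single (Fin.last n) 1 := by
  funext i
  rcases eq_or_ne i (Fin.last n) with rfl | hi
  · simp [wgt_apply]
    field_simp
    ring
  · simp [wgt_apply, hi]
    field_simp

theorem single_mem_latticeN {r : ℕ} (i : Fin r) : Pi.single i 1 ∈ latticeN l r :=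
  ⟨Pi.single i 1, 0, by funext k; simp [Pi.single_apply]⟩

theorem wgt_mem_latticeN {r : ℕ} : wgt l r ∈ latticeN l r :=
  ⟨0, 1, by funext i; simp⟩

theorem nj_mem_latticeN (hl : (l : ℚ) ≠ 0) (m : ℕ) : nj l (n + 1) m ∈ latticeN l (n + 1) := by
  rw [nj_eq_zsmul_wgt_add_zsmul_single_last hl]
  exact add_mem (zsmul_mem wgt_mem_latticeN _) (zsmul_mem (single_mem_latticeN _) _)

theorem latticeN_le {r : ℕ} {P : Submodule ℤ (Fin r → ℚ)} (hsingle : ∀ i, Pi.single i 1 ∈ P)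
    (hwgt : wgt l r ∈ P) : latticeN l r ≤ P := by
  rintro _ ⟨a, c, rfl⟩
  have ha : (fun i => (a i : ℚ)) = ∑ i, a i • Pi.single i (1 : ℚ) := by
    funext k
    simp [Finset.sum_apply, Pi.single_apply]
  rw [ha]
  exact add_mem (P.sum_mem fun i _ => P.smul_mem _ (hsingle i)) (P.smul_mem c hwgt)

/-- The vertex set `B(m + 1; S)`. -/
def canonicalSimplexVertices (l n m : ℕ) (S : Finset (Fin (n + 1))) :
    Finset (Fin (n + 1) → ℚ) :=
  insert (nj l (n + 1) m) (insert (nj l (n + 1) (m + 1)) (S.image fun ξ => Pi.single ξ 1))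

theorem card_canonicalSimplexVertices_le (m : ℕ) (S : Finset (Fin (n + 1))) :
    (canonicalSimplexVertices l n m S).card ≤ S.card + 2 :=
  (Finset.card_insert_le _ _).trans <| Nat.succ_le_succ <|
    (Finset.card_insert_le _ _).trans <| Nat.succ_le_succ Finset.card_image_le

theorem span_canonicalSimplexVertices (hl : (l : ℚ) ≠ 0) (m : ℕ) {S : Finset (Fin (n + 1))}
    {k : Fin (n + 1)} (hk : Finset.univ.erase k ⊆ insert (Fin.last n) S) :
    Submodule.span ℤ (canonicalSimplexVertices l n m S : Set (Fin (n + 1) → ℚ)) =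
      latticeN l (n + 1) := by
  set P := Submodule.span ℤ (canonicalSimplexVertices l n m S : Set (Fin (n + 1) → ℚ))
  refine le_antisymm ?_ ?_
  · rw [Submodule.span_le]
    intro x hx
    simp only [canonicalSimplexVertices, Finset.coe_insert, Finset.coe_image, Set.mem_insert_iff,
      Set.mem_image] at hx
    rcases hx with rfl | rfl | ⟨ξ, -, rfl⟩
    exacts [nj_mem_latticeN hl m, nj_mem_latticeN hl (m + 1), single_mem_latticeN ξ]
  have hnj₀ : nj l (n + 1) m ∈ P := Submodule.subset_span (by simp [canonicalSimplexVertices])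
  have hnj₁ : nj l (n + 1) (m + 1) ∈ P :=
    Submodule.subset_span (by simp [canonicalSimplexVertices])
  have hS : ∀ ξ ∈ S, Pi.single ξ 1 ∈ P := fun ξ hξ =>
    Submodule.subset_span <| Finset.mem_insert_of_mem <| Finset.mem_insert_of_mem <|
      Finset.mem_image_of_mem _ hξ
  have hlast : Pi.single (Fin.last n) 1 ∈ P := by
    rw [single_last_eq_zsmul_nj_sub_zsmul_nj hl m]
    exact sub_mem (zsmul_mem hnj₀ _) (zsmul_mem hnj₁ _)
  have hwgt : wgt l (n + 1) ∈ P := by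
    rw [wgt_eq_nj_succ_sub_nj_add_single_last hl m]
    exact add_mem (sub_mem hnj₁ hnj₀) hlast
  have hone : ∑ i, Pi.single i (1 : ℚ) ∈ P := by
    rw [show ∑ i, Pi.single i (1 : ℚ) = 1 from Finset.univ_sum_single 1,
      one_eq_zsmul_wgt_sub_zsmul_single_last hl]
    exact sub_mem (zsmul_mem hwgt _) (zsmul_mem hlast _)
  have hne : ∀ i ≠ k, Pi.single i 1 ∈ P := fun i hi =>
    (Finset.mem_insert.1 (hk (Finset.mem_erase.2 ⟨hi, Finset.mem_univ i⟩))).elim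
      (fun h => h ▸ hlast) (hS i)
  have hsingle : ∀ i, Pi.single i 1 ∈ P := fun i =>
    if hi : i = k then hi ▸ Submodule.mem_of_sum_mem_of_forall_ne hone k hne else hne i hi
  exact latticeN_le hsingle hwgt

end

theorem canonical_simplices_are_basic_general (l r : ℕ) (hr : 2 ≤ r) (hl : r ≤ l)
    (j : ℕ) (hj1 : 1 ≤ j)
    (S : Finset (Fin r)) (hScard : S.card = r - 2)
    (hS : ∀ ξ ∈ S, (ξ : ℕ) + 1 ≠ r)
    (B : Finset (Fin r → ℚ))
    (hB : B = insert (nj l r (j - 1)) (insert (nj l r j)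
            (S.image fun ξ => (Pi.single ξ 1 : Fin r → ℚ)))) :
    B.card = r ∧
    LinearIndependent ℤ (fun v : (B : Set (Fin r → ℚ)) => (v : Fin r → ℚ)) ∧
    (Submodule.span ℤ (B : Set (Fin r → ℚ)) : Set (Fin r → ℚ)) = {v | memN l r v} := by
  obtain ⟨n, rfl⟩ : ∃ n, r = n + 1 := ⟨r - 1, by omega⟩
  obtain ⟨m, rfl⟩ : ∃ m, j = m + 1 := ⟨j - 1, by omega⟩
  replace hB : B = canonicalSimplexVertices l n m S := by simpa [canonicalSimplexVertices] using hB
  subst hB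
  have hl0 : (l : ℚ) ≠ 0 := by exact_mod_cast (show l ≠ 0 by omega)
  have hlast : Fin.last n ∉ S := fun h => hS _ h (by simp)
  obtain ⟨k, hk⟩ := Finset.exists_erase_subset_of_card_le (T := insert (Fin.last n) S)
    (by rw [Finset.card_insert_of_notMem hlast, hScard, Fintype.card_fin]; omega)
  have hspan := span_canonicalSimplexVertices hl0 m hk
  have hspanℚ := span_rat_eq_top_of_single_mem_span_int fun i => hspan ▸ single_mem_latticeN i
  obtain ⟨hcard, hli⟩ := Finset.card_eq_finrank_and_linearIndependent
    (by simpa [hScard] using (card_canonicalSimplexVertices_le m S).trans (by omega)) hspanℚ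
  exact ⟨by simpa using hcard, hli.restrict_scalars' ℤ, by rw [hspan]; rfl⟩

/-- For `1 ≤ j ≤ ν = ⌊l/(r−1)⌋` and every `(r−2)`-element subset `S` of the
first `r−1` coordinate directions, the `r`-element set
`B(j;S) = {n⁽ʲ⁻¹⁾, n⁽ʲ⁾} ∪ {e ξ : ξ ∈ S}` is a `ℤ`-basis of the lattice `N`;
i.e. each simplex `conv(B(j;S))` of the canonical triangulation of the junior
simplex is basic. -/
theorem canonical_simplices_are_basic (l r : ℕ) (hr : 2 ≤ r) (hl : r ≤ l)
    (j : ℕ) (hj1 : 1 ≤ j) (hj2 : j ≤ l / (r - 1))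
    (S : Finset (Fin r)) (hScard : S.card = r - 2)
    (hS : ∀ ξ ∈ S, (ξ : ℕ) + 1 ≠ r)
    (B : Finset (Fin r → ℚ))
    (hB : B = insert (nj l r (j - 1)) (insert (nj l r j)
            (S.image fun ξ => (Pi.single ξ 1 : Fin r → ℚ)))) :
    B.card = r ∧
    LinearIndependent ℤ (fun v : (B : Set (Fin r → ℚ)) => (v : Fin r → ℚ)) ∧
    (Submodule.span ℤ (B : Set (Fin r → ℚ)) : Set (Fin r → ℚ)) = {v | memN l r v} :=
  canonical_simplices_are_basic_general l r hr hl j hj1 S hScard hS B hB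
end
end

section
/- If (r−1) does not divide l, then the r vectors n^(ν), e_1, …, e_{r−1} are ℤ-linearly independent and the subgroup of N that they generate has finite index [l]_{r−1} in N; equivalently |det(n^(ν), e_1,…,e_{r−1})| = [l]_{r−1}/l, so the last simplex conv({n^(ν), e_1,…,e_{r−1}}) of the canonical triangulation has multiplicity [l]_{r−1} with respect to N. -/
/-! The matrix is the identity with its last column replaced by `n⁽ᵛ⁾`, so its determinant is the
last coordinate `(l − ν(r−1))/l = [l]_{r−1}/l` of `n⁽ᵛ⁾`. This is nonzero, so the columns are
`ℚ`-linearly independent, hence `ℤ`-linearly independent. -/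

noncomputable section

theorem Matrix.det_one_updateCol {n R : Type*} [Fintype n] [DecidableEq n] [CommRing R]
    (j : n) (v : n → R) : ((1 : Matrix n n R).updateCol j v).det = v j := by
  simpa [Matrix.one_apply] using det_updateCol_sum (1 : Matrix n n R) j v

theorem Matrix.of_ite_last_eq_updateCol_one {n : ℕ} {R : Type*} [Zero R] [One R]
    (w : Fin (n + 1) → R) :
    (Matrix.of fun i k : Fin (n + 1) =>
      (if (k : ℕ) + 1 = n + 1 then w else (Pi.single k 1 : Fin (n + 1) → R)) i) =
      (1 : Matrix (Fin (n + 1)) (Fin (n + 1)) R).updateCol (Fin.last n) w := by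
  ext i k
  by_cases hk : k = Fin.last n
  · subst hk
    simp
  · have hk' : (k : ℕ) + 1 ≠ n + 1 := fun h => hk (Fin.ext (by simp at h ⊢; omega))
    rw [Matrix.of_apply, if_neg hk', Matrix.updateCol_ne hk, Matrix.one_apply, Pi.single_apply]

theorem nj_last_floor_div (l n : ℕ) :
    nj l (n + 1) (l / n) (Fin.last n) = ((l % n : ℕ) : ℚ) / l := by
  have hmod : ((l % n : ℕ) : ℚ) = l - (l / n : ℕ) * n := by
    rw [eq_sub_iff_add_eq, ← Nat.cast_mul, ← Nat.cast_add, Nat.mul_comm, Nat.mod_add_div]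
  simp [nj, hmod]

theorem last_simplex_multiplicity_general (l r : ℕ) (hr : 2 ≤ r)
    (hndvd : ¬ (r - 1) ∣ l) :
    LinearIndependent ℤ (fun k : Fin r =>
      if (k : ℕ) + 1 = r then nj l r (l / (r - 1)) else (Pi.single k 1 : Fin r → ℚ)) ∧
    |(Matrix.of fun i k : Fin r =>
        (if (k : ℕ) + 1 = r then nj l r (l / (r - 1))
          else (Pi.single k 1 : Fin r → ℚ)) i).det|
      = ((l % (r - 1) : ℕ) : ℚ) / l := by
  obtain ⟨n, rfl⟩ : ∃ n, r = n + 1 := ⟨r - 1, by omega⟩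
  simp only [Nat.add_sub_cancel] at hndvd ⊢
  set M := Matrix.of fun i k : Fin (n + 1) =>
    (if (k : ℕ) + 1 = n + 1 then nj l (n + 1) (l / n) else (Pi.single k 1 : Fin (n + 1) → ℚ)) i
  have hdet : M.det = ((l % n : ℕ) : ℚ) / l := by
    rw [show M = _ from Matrix.of_ite_last_eq_updateCol_one _, Matrix.det_one_updateCol,
      nj_last_floor_div]
  have hmod : l % n ≠ 0 := fun h => hndvd (Nat.dvd_of_mod_eq_zero h)
  have hl : l ≠ 0 := fun h => hmod (by simp [h])
  have hdet_pos : 0 < M.det := by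
    rw [hdet]
    positivity
  exact ⟨(Matrix.linearIndependent_cols_of_det_ne_zero (A := M) hdet_pos.ne').restrict_scalars' ℤ,
    by rw [abs_of_pos hdet_pos, hdet]⟩

/-- If `(r−1)` does not divide `l`, the vectors `n⁽ᵛ⁾, e 1, …, e (r−1)`
(with `ν = ⌊l/(r−1)⌋`) are `ℤ`-linearly independent and the absolute value of
their determinant equals `[l]_{r−1}/l`, so the last simplex
`conv({n⁽ᵛ⁾, e 1, …, e (r−1)})` of the canonical triangulation has
multiplicity `[l]_{r−1}` with respect to the lattice `N` (of determinant `1/l`). -/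
theorem last_simplex_multiplicity (l r : ℕ) (hr : 2 ≤ r) (hl : r ≤ l)
    (hndvd : ¬ (r - 1) ∣ l) :
    LinearIndependent ℤ (fun k : Fin r =>
      if (k : ℕ) + 1 = r then nj l r (l / (r - 1)) else (Pi.single k 1 : Fin r → ℚ)) ∧
    |(Matrix.of fun i k : Fin r =>
        (if (k : ℕ) + 1 = r then nj l r (l / (r - 1))
          else (Pi.single k 1 : Fin r → ℚ)) i).det|
      = ((l % (r - 1) : ℕ) : ℚ) / l :=
  last_simplex_multiplicity_general l r hr hndvd
end
end

section
/- The cones over the simplices of the canonical triangulation cover the positive orthant: if (r−1) divides l, then σ0 = ⋃_{j=1}^{ν} ⋃_S pos({n^(j−1), n^(j)} ∪ {e_ξ : ξ ∈ S}), the inner union being over all (r−2)-element subsets S ⊆ {1,…,r−1}; if (r−1) does not divide l, then σ0 equals this union together with pos({n^(ν), e_1, …, e_{r−1}}). -/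
noncomputable section

/-!
Let `y ≥ 0`, let `m = y k` be the least of its first `r - 1` coordinates, `t` its last one, and
`s = t + (r - 1) m`. A point `(μ, …, μ, t)` with `μ ≤ m` differs from `y` by nonnegative multiples
of unit vectors among the first `r - 1` (not involving `e k` when `μ = m`), so it suffices to put
such a point into the right cone. If `l m ≤ ν s`, pick `j` with `(j - 1) s ≤ l m ≤ j s`; then
`(m, …, m, t) ∈ pos(n⁽ʲ⁻¹⁾, n⁽ʲ⁾)`. Otherwise `ν (r - 1) < l`, which rules out `(r - 1) ∣ l`, and
the multiple of `n⁽ᵛ⁾` with last coordinate `t` has `μ ≤ m`.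
-/

open Finset

def orthant (r : ℕ) : Set (Fin r → ℝ) := {y | ∀ i, 0 ≤ y i}

def nonLast (r : ℕ) : Finset (Fin r) := Finset.univ.filter fun i : Fin r => (i : ℕ) + 1 ≠ r

def unitVectors {r : ℕ} (S : Finset (Fin r)) : Finset (Fin r → ℚ) :=
  S.image fun ξ => (Pi.single ξ 1 : Fin r → ℚ)

def admissibleFaces (r : ℕ) : Set (Finset (Fin r)) :=
  {S | S.card = r - 2 ∧ ∀ ξ ∈ S, (ξ : ℕ) + 1 ≠ r}

def canonicalCone (l r j : ℕ) (S : Finset (Fin r)) : Set (Fin r → ℝ) :=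
  posR (insert (nj l r (j - 1)) (insert (nj l r j) (unitVectors S)))

def residualCone (l r : ℕ) : Set (Fin r → ℝ) :=
  posR (insert (nj l r (l / (r - 1))) (unitVectors (nonLast r)))

def diagPoint (r : ℕ) (m t : ℝ) : Fin r → ℝ := fun i => if (i : ℕ) + 1 = r then t else m

section posR

variable {r : ℕ} {B : Finset (Fin r → ℚ)}

lemma zero_mem_posR : (0 : Fin r → ℝ) ∈ posR B :=
  ⟨0, fun _ => le_rfl, by simp⟩

lemma add_mem_posR {x y : Fin r → ℝ} (hx : x ∈ posR B) (hy : y ∈ posR B) :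
    x + y ∈ posR B := by
  obtain ⟨c, hc, rfl⟩ := hx
  obtain ⟨d, hd, rfl⟩ := hy
  exact ⟨c + d, fun b => add_nonneg (hc b) (hd b), by simp only [Pi.add_apply, add_smul,
    Finset.sum_add_distrib]⟩

lemma smul_castQR_mem_posR {b : Fin r → ℚ} (hb : b ∈ B) {a : ℝ} (ha : 0 ≤ a) :
    a • castQR b ∈ posR B := by
  classical
  refine ⟨Pi.single b a, fun v => by by_cases h : v = b <;> simp [h, ha], ?_⟩
  rw [Finset.sum_eq_single_of_mem b hb fun v _ hv => by simp [hv], Pi.single_eq_same]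

lemma castQR_single (ξ : Fin r) : castQR (Pi.single ξ 1 : Fin r → ℚ) = Pi.single ξ 1 := by
  funext i
  by_cases h : i = ξ <;> simp [castQR, h]

lemma mem_posR_of_le_of_eq {w y : Fin r → ℝ} {T : Finset (Fin r)} (hw : w ∈ posR B)
    (hT : unitVectors T ⊆ B) (hle : ∀ i ∈ T, w i ≤ y i) (heq : ∀ i ∉ T, w i = y i) :
    y ∈ posR B := by
  have hy : y = w + ∑ i ∈ T, (y i - w i) • castQR (Pi.single i 1 : Fin r → ℚ) := by
    funext k
    by_cases hk : k ∈ T <;> simp [castQR_single, Pi.single_apply, hk, heq]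
  rw [hy]
  refine add_mem_posR hw (Finset.sum_induction _ (· ∈ posR B) (fun _ _ => add_mem_posR)
    zero_mem_posR fun i hi => smul_castQR_mem_posR ?_ (sub_nonneg.2 (hle i hi)))
  exact hT (mem_image_of_mem _ hi)

lemma posR_subset_orthant (hB : ∀ b ∈ B, 0 ≤ b) : posR B ⊆ orthant r := by
  rintro y ⟨c, hc, rfl⟩ i
  rw [Finset.sum_apply]
  exact Finset.sum_nonneg fun b hb =>
    mul_nonneg (hc b) (by exact_mod_cast hB b hb i : (0 : ℝ) ≤ b i)

end posR

lemma unitVectors_nonneg {r : ℕ} {S : Finset (Fin r)} : ∀ b ∈ unitVectors S, 0 ≤ b := by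
  simpa only [unitVectors, Finset.forall_mem_image] using
    fun ξ _ => Pi.single_nonneg.2 zero_le_one

section nj

variable {l r j : ℕ}

lemma castQR_nj : castQR (nj l r j) = diagPoint r (j / l) ((l - j * (r - 1)) / l) := by
  funext i
  simp only [castQR, nj, diagPoint]
  split_ifs <;> push_cast <;> rfl

lemma nj_nonneg_s11 (hr : 1 ≤ r) (h : j * (r - 1) ≤ l) : 0 ≤ nj l r j := by
  intro i
  have h' : ((j * (r - 1) : ℕ) : ℚ) ≤ l := by exact_mod_cast h
  rw [Nat.cast_mul, Nat.cast_sub hr, Nat.cast_one] at h'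
  simp only [nj, Pi.zero_apply]
  split_ifs <;> exact div_nonneg (by linarith [(Nat.cast_nonneg j : (0 : ℚ) ≤ j)]) l.cast_nonneg

end nj

section diagPoint

variable {l r j : ℕ} {B : Finset (Fin r → ℚ)}

/-- `n⁽ʲ⁾` has coordinate sum `1` and common coordinate `j / l`, so the weights `a, b` of
`n⁽ʲ⁻¹⁾, n⁽ʲ⁾` are forced by `a + b = t + (r - 1) m` and `(j - 1) a + j b = l m`. -/
lemma diagPoint_mem_posR_of_mem_pair (hl : 0 < l) (hj : 1 ≤ j) (h₀ : nj l r (j - 1) ∈ B)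
    (h₁ : nj l r j ∈ B) {m t : ℝ} (hlo : ((j : ℝ) - 1) * (t + (r - 1) * m) ≤ l * m)
    (hhi : l * m ≤ j * (t + (r - 1) * m)) : diagPoint r m t ∈ posR B := by
  have hl' : (l : ℝ) ≠ 0 := by positivity
  have hsplit : diagPoint r m t = (j * (t + (r - 1) * m) - l * m) • castQR (nj l r (j - 1))
      + (l * m - (j - 1) * (t + (r - 1) * m)) • castQR (nj l r j) := by
    funext i
    simp only [castQR_nj, diagPoint, Nat.cast_sub hj, Nat.cast_one, Pi.add_apply,
      Pi.smul_apply, smul_eq_mul]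
    split_ifs <;> field_simp <;> ring
  rw [hsplit]
  exact add_mem_posR (smul_castQR_mem_posR h₀ (by linarith))
    (smul_castQR_mem_posR h₁ (by linarith))

lemma diagPoint_mem_posR_of_mem (hl : 0 < l) (hd : (j : ℝ) * (r - 1) < l) (h : nj l r j ∈ B)
    {t : ℝ} (ht : 0 ≤ t) : diagPoint r (j * t / (l - j * (r - 1))) t ∈ posR B := by
  have hl' : (l : ℝ) ≠ 0 := by positivity
  have hd' : (l : ℝ) - j * (r - 1) ≠ 0 := by linarith
  have hsplit : diagPoint r (j * t / (l - j * (r - 1))) t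
      = (l * t / (l - j * (r - 1))) • castQR (nj l r j) := by
    funext i
    simp only [castQR_nj, diagPoint, Pi.smul_apply, smul_eq_mul]
    split_ifs <;> field_simp
  rw [hsplit]
  exact smul_castQR_mem_posR h (div_nonneg (by positivity) (by linarith))

end diagPoint

lemma exists_nat_bracket {x s : ℝ} {ν : ℕ} (hν : 1 ≤ ν) (hx : 0 ≤ x) (hxs : x ≤ ν * s) :
    ∃ j : ℕ, 1 ≤ j ∧ j ≤ ν ∧ ((j : ℝ) - 1) * s ≤ x ∧ x ≤ j * s := by
  rcases (nonneg_of_mul_nonneg_right (hx.trans hxs) (by positivity)).eq_or_lt with hs | hs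
  · subst hs
    exact ⟨1, le_rfl, hν, by simp [hx], by linarith⟩
  refine ⟨max 1 ⌈x / s⌉₊, le_max_left _ _, max_le hν (Nat.ceil_le.2 ?_), ?_, ?_⟩
  · rwa [div_le_iff₀ hs]
  · rcases le_total ⌈x / s⌉₊ 1 with h | h
    · simp [max_eq_left h, hx]
    · rw [max_eq_right h, ← le_div_iff₀ hs]
      linarith [Nat.ceil_lt_add_one (div_nonneg hx hs.le)]
  · rw [← div_le_iff₀ hs]
    exact (Nat.le_ceil _).trans (by exact_mod_cast le_max_right _ _)

section nonLast

variable {r : ℕ}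

@[simp] lemma mem_nonLast {i : Fin r} : i ∈ nonLast r ↔ (i : ℕ) + 1 ≠ r := by
  simp [nonLast]

lemma card_nonLast (hr : 1 ≤ r) : (nonLast r).card = r - 1 := by
  have : nonLast r = univ.erase ⟨r - 1, by omega⟩ := by
    ext i
    simp only [mem_nonLast, mem_erase, Finset.mem_univ, and_true, ne_eq, Fin.ext_iff]
    omega
  rw [this, card_erase_of_mem (mem_univ _), card_univ, Fintype.card_fin]

lemma diagPoint_of_mem_nonLast {m t : ℝ} {i : Fin r} (hi : i ∈ nonLast r) :
    diagPoint r m t i = m :=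
  if_neg (mem_nonLast.1 hi)

lemma val_add_one_of_notMem_nonLast {i : Fin r} (hi : i ∉ nonLast r) : (i : ℕ) + 1 = r :=
  not_not.1 (mt mem_nonLast.2 hi)

lemma diagPoint_of_notMem_nonLast {m t : ℝ} {i : Fin r} (hi : i ∉ nonLast r) :
    diagPoint r m t i = t :=
  if_pos (val_add_one_of_notMem_nonLast hi)

end nonLast

section cover

variable {l r : ℕ} {y : Fin r → ℝ} {k : Fin r} {t : ℝ}

lemma mem_canonicalCone_of_bracket {j : ℕ} (hl : 0 < l) (hj : 1 ≤ j) (hk : k ∈ nonLast r)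
    (hmin : ∀ i ∈ nonLast r, y k ≤ y i) (ht : ∀ i ∉ nonLast r, y i = t)
    (hlo : ((j : ℝ) - 1) * (t + (r - 1) * y k) ≤ l * y k)
    (hhi : l * y k ≤ j * (t + (r - 1) * y k)) :
    y ∈ canonicalCone l r j ((nonLast r).erase k) := by
  refine mem_posR_of_le_of_eq (w := diagPoint r (y k) t)
    (diagPoint_mem_posR_of_mem_pair hl hj (mem_insert_self _ _)
      (mem_insert_of_mem (mem_insert_self _ _)) hlo hhi)
    (fun b hb => mem_insert_of_mem (mem_insert_of_mem hb)) (fun i hi => ?_) (fun i hi => ?_)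
  · obtain ⟨-, hi⟩ := mem_erase.1 hi
    rw [diagPoint_of_mem_nonLast hi]
    exact hmin i hi
  · by_cases hik : i = k
    · rw [hik, diagPoint_of_mem_nonLast hk]
    · have hi' : i ∉ nonLast r := fun h => hi (mem_erase.2 ⟨hik, h⟩)
      rw [diagPoint_of_notMem_nonLast hi', ht i hi']

lemma mem_residualCone_of_lt (hl : 0 < l) (hd : ((l / (r - 1) : ℕ) : ℝ) * (r - 1) < l)
    (hmin : ∀ i ∈ nonLast r, y k ≤ y i) (ht : ∀ i ∉ nonLast r, y i = t) (ht₀ : 0 ≤ t)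
    (hlt : ((l / (r - 1) : ℕ) : ℝ) * (t + (r - 1) * y k) < l * y k) :
    y ∈ residualCone l r := by
  set ν := l / (r - 1)
  have hbound : ν * t / (l - ν * (r - 1)) ≤ y k := by
    rw [div_le_iff₀ (by linarith)]
    linarith
  refine mem_posR_of_le_of_eq (diagPoint_mem_posR_of_mem hl hd (mem_insert_self _ _) ht₀)
    (fun b hb => mem_insert_of_mem hb) (fun i hi => ?_) (fun i hi => ?_)
  · rw [diagPoint_of_mem_nonLast hi]
    exact hbound.trans (hmin i hi)
  · rw [diagPoint_of_notMem_nonLast hi, ht i hi]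

end cover

lemma mem_canonicalCone_or_residualCone {l r : ℕ} (hr : 2 ≤ r) (hl : r ≤ l) {y : Fin r → ℝ}
    (hy : y ∈ orthant r) :
    (∃ j ∈ Icc 1 (l / (r - 1)), ∃ S ∈ admissibleFaces r, y ∈ canonicalCone l r j S) ∨
      (¬ (r - 1) ∣ l ∧ y ∈ residualCone l r) := by
  set ν := l / (r - 1)
  have hν : 1 ≤ ν := (Nat.le_div_iff_mul_le (by omega)).2 (by omega)
  have hl₀ : 0 < l := by omega
  have hr₁ : ((r - 1 : ℕ) : ℝ) = r - 1 := by rw [Nat.cast_sub (by omega), Nat.cast_one]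
  obtain ⟨k, hk, hmin⟩ := (nonLast r).exists_min_image y
    ⟨⟨0, by omega⟩, mem_nonLast.2 (by dsimp only; omega)⟩
  set t := y ⟨r - 1, by omega⟩
  have ht : ∀ i ∉ nonLast r, y i = t := fun i hi =>
    congrArg y (Fin.ext (by dsimp only; have := val_add_one_of_notMem_nonLast hi; omega))
  have hm₀ := hy k
  have ht₀ : 0 ≤ t := hy _
  by_cases hcase : l * y k ≤ ν * (t + (r - 1) * y k)
  · obtain ⟨j, hj₁, hjν, hlo, hhi⟩ := exists_nat_bracket hν (by positivity) hcase
    refine Or.inl ⟨j, mem_Icc.2 ⟨hj₁, hjν⟩, _, ⟨?_, fun ξ hξ => ?_⟩,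
      mem_canonicalCone_of_bracket hl₀ hj₁ hk hmin ht hlo hhi⟩
    · rw [card_erase_of_mem hk, card_nonLast (by omega)]
      omega
    · exact mem_nonLast.1 (mem_of_mem_erase hξ)
  · rw [not_le] at hcase
    have hd : (ν : ℝ) * (r - 1) < l := by nlinarith
    refine Or.inr ⟨fun hdvd => hd.ne ?_, mem_residualCone_of_lt hl₀ hd hmin ht ht₀ hcase⟩
    rw [← hr₁]
    exact_mod_cast Nat.div_mul_cancel hdvd

lemma canonicalCone_subset_orthant {l r j : ℕ} (hr : 1 ≤ r) (hj : j ≤ l / (r - 1))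
    (S : Finset (Fin r)) : canonicalCone l r j S ⊆ orthant r := by
  have hjl : j * (r - 1) ≤ l := (Nat.mul_le_mul_right _ hj).trans (Nat.div_mul_le_self _ _)
  refine posR_subset_orthant fun b hb => ?_
  rcases mem_insert.1 hb with rfl | hb
  · exact nj_nonneg_s11 hr ((Nat.mul_le_mul_right _ (Nat.sub_le _ _)).trans hjl)
  rcases mem_insert.1 hb with rfl | hb
  · exact nj_nonneg_s11 hr hjl
  · exact unitVectors_nonneg b hb

lemma residualCone_subset_orthant {l r : ℕ} (hr : 1 ≤ r) : residualCone l r ⊆ orthant r := by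
  refine posR_subset_orthant fun b hb => ?_
  rcases mem_insert.1 hb with rfl | hb
  · exact nj_nonneg_s11 hr (Nat.div_mul_le_self _ _)
  · exact unitVectors_nonneg b hb

/-- The cones over the simplices of the canonical triangulation cover the
positive orthant: if `(r−1) ∣ l` the cones `pos({n⁽ʲ⁻¹⁾, n⁽ʲ⁾} ∪ {e ξ : ξ ∈ S})`
(for `1 ≤ j ≤ ν` and `(r−2)`-subsets `S` of the first `r−1` directions) cover
`σ0`; otherwise one must add the cone `pos({n⁽ᵛ⁾, e 1, …, e (r−1)})`. -/
theorem canonical_cones_cover_orthant (l r : ℕ) (hr : 2 ≤ r) (hl : r ≤ l) :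
    ((r - 1) ∣ l →
      {y : Fin r → ℝ | ∀ i, 0 ≤ y i}
        = ⋃ j ∈ Finset.Icc 1 (l / (r - 1)),
            ⋃ S ∈ {S : Finset (Fin r) | S.card = r - 2 ∧ ∀ ξ ∈ S, (ξ : ℕ) + 1 ≠ r},
              posR (insert (nj l r (j - 1)) (insert (nj l r j)
                (S.image fun ξ => (Pi.single ξ 1 : Fin r → ℚ))))) ∧
    (¬ (r - 1) ∣ l →
      {y : Fin r → ℝ | ∀ i, 0 ≤ y i}
        = (⋃ j ∈ Finset.Icc 1 (l / (r - 1)),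
            ⋃ S ∈ {S : Finset (Fin r) | S.card = r - 2 ∧ ∀ ξ ∈ S, (ξ : ℕ) + 1 ≠ r},
              posR (insert (nj l r (j - 1)) (insert (nj l r j)
                (S.image fun ξ => (Pi.single ξ 1 : Fin r → ℚ)))))
          ∪ posR (insert (nj l r (l / (r - 1)))
              ((Finset.univ.filter fun i : Fin r => (i : ℕ) + 1 ≠ r).image
                fun ξ => (Pi.single ξ 1 : Fin r → ℚ)))) := by
  have hunion : (⋃ j ∈ Icc 1 (l / (r - 1)), ⋃ S ∈ admissibleFaces r, canonicalCone l r j S)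
      ⊆ orthant r := Set.iUnion₂_subset fun j hj => Set.iUnion₂_subset fun S _ =>
    canonicalCone_subset_orthant (by omega) (mem_Icc.1 hj).2 S
  refine ⟨fun hdvd => hunion.antisymm' fun y hy => ?_, fun _ =>
    (Set.union_subset hunion (residualCone_subset_orthant (by omega))).antisymm'
      fun y hy => ?_⟩
  all_goals rcases mem_canonicalCone_or_residualCone hr hl hy with
    ⟨j, hj, S, hS, hyS⟩ | ⟨hndvd, hyR⟩
  · exact Set.mem_biUnion hj (Set.mem_biUnion hS hyS)
  · exact absurd hdvd hndvd
  · exact Or.inl (Set.mem_biUnion hj (Set.mem_biUnion hS hyS))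
  · exact Or.inr hyR
end
end

section
/- (Existence criterion for crepant full resolutions of the series (1/l)(1,…,1,l−(r−1)).) There exists a finite family B_1,…,B_m of r-element subsets of s_G ∩ N, each of which is a ℤ-basis of the lattice N, such that σ0 = pos(B_1) ∪ … ∪ pos(B_m), if and only if l ≡ 0 (mod r−1) or l ≡ 1 (mod r−1). -/
/-!
Write `n = r - 1` and index coordinates by `0, …, n`. A junior lattice point is either a unit
vector `eⱼ` with `j < n` or one of the points `pₖ = (k/l, …, k/l, (l - n k)/l)` with `n k ≤ l`.

If `l mod n ≥ 2`, consider `y = (l - 1, …, l - 1, n)`. A cone omitting some `eⱼ` with `j < n`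
cannot contain `y`: all its generators `b` satisfy `l bⱼ ≤ ⌊l/n⌋ ∑ b`, while `l yⱼ > ⌊l/n⌋ ∑ y`.
So `y` lies in a cone over `e₀, …, eₙ₋₁, pₖ`, of determinant `(l - n k)/l`; as `N` has covolume
`1/l`, this is a basis of `N` only if `l = n k + 1`.

Conversely, the cones over `pₖ, pₖ₊₁` and the `eᵢ` with `i < n`, `i ≠ j` (for `k < ⌊l/n⌋`),
together with the cone over `e₀, …, eₙ₋₁, p_{⌊l/n⌋}` when `l ≡ 1`, are basic and cover the
orthant: put `y` into a cone with `j` minimising `yⱼ` over `j < n` and with `k` where the sign of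
`(l - n k) yⱼ - k yₙ` changes.
-/
noncomputable section

theorem eq_single_of_sum_eq_one {ι R : Type*} [Fintype ι] [DecidableEq ι] [CommRing R]
    [LinearOrder R] [IsStrictOrderedRing R] {v : ι → R} (h0 : ∀ i, 0 ≤ v i) (h1 : ∑ i, v i = 1)
    {j : ι} (hj : 1 ≤ v j) : v = Pi.single j 1 := by
  have hsplit := Finset.add_sum_erase Finset.univ v (Finset.mem_univ j)
  have hrest : ∑ i ∈ Finset.univ.erase j, v i = 0 :=
    le_antisymm (by linarith) (Finset.sum_nonneg fun i _ => h0 i)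
  have hvj : v j = 1 := by linarith
  rw [Finset.sum_eq_zero_iff_of_nonneg fun i _ => h0 i] at hrest
  ext i
  by_cases hij : i = j
  · simp [hij, hvj]
  · simp [hij, hrest i (by simp [hij])]

theorem exists_nonneg_nonpos_succ {α : Type*} [LinearOrder α] [Zero α] (f : ℕ → α)
    (h0 : 0 ≤ f 0) {K : ℕ} (hK : f (K + 1) ≤ 0) : ∃ k ≤ K, 0 ≤ f k ∧ f (k + 1) ≤ 0 := by
  induction K with
  | zero => exact ⟨0, le_rfl, h0, hK⟩
  | succ K ih =>
    by_cases h : 0 ≤ f (K + 1)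
    · exact ⟨K + 1, le_rfl, h, hK⟩
    · obtain ⟨k, hk, H⟩ := ih (not_le.1 h).le
      exact ⟨k, hk.trans K.le_succ, H⟩

theorem Finset.exists_fin_iUnion_eq_biUnion {α β : Type*} (S : Finset α) (f : α → Set β) :
    ∃ (m : ℕ) (e : Fin m → α), (∀ i, e i ∈ S) ∧ ⋃ i, f (e i) = ⋃ a ∈ S, f a :=
  ⟨S.card, fun i => S.equivFin.symm i, fun i => (S.equivFin.symm i).2, by
    rw [S.equivFin.symm.surjective.iUnion_comp (fun a => f a), Set.iUnion_subtype]⟩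

theorem card_eq_and_linearIndependent_of_single_mem_span {r : ℕ} {B : Finset (Fin r → ℚ)}
    (hB : ∀ i, Pi.single i 1 ∈ Submodule.span ℤ (B : Set (Fin r → ℚ))) (hcard : B.card ≤ r) :
    B.card = r ∧ LinearIndependent ℤ (fun v : (B : Set (Fin r → ℚ)) => (v : Fin r → ℚ)) := by
  have htop : Submodule.span ℚ (B : Set (Fin r → ℚ)) = ⊤ := by
    rw [eq_top_iff, ← (Pi.basisFun ℚ (Fin r)).span_eq, Submodule.span_le]
    rintro _ ⟨i, rfl⟩
    rw [Pi.basisFun_apply]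
    exact Submodule.span_le_restrictScalars ℤ ℚ _ (hB i)
  have hcard' : B.card = r := by
    refine le_antisymm hcard ?_
    have := finrank_span_finset_le_card (R := ℚ) B
    rwa [Set.finrank, htop, finrank_top, Module.finrank_fin_fun] at this
  refine ⟨hcard', LinearIndependent.restrict_scalars' ℤ (K := ℚ) ?_⟩
  apply linearIndependent_of_top_le_span_of_card_eq_finrank
  · simpa using htop.ge
  · simp [hcard']

namespace JuniorSimplex

open Submodule Fin

variable {l n : ℕ}

@[simp]
theorem castQR_apply {r : ℕ} (v : Fin r → ℚ) (i : Fin r) : castQR v i = v i := rfl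

@[simp]
theorem castQR_single {r : ℕ} (i : Fin r) : castQR (Pi.single i 1) = Pi.single i 1 := by
  ext k
  by_cases h : k = i <;> simp [h]

theorem castQR_injective {r : ℕ} : Function.Injective (castQR (r := r)) :=
  fun _ _ h => funext fun i => Rat.cast_injective (congrFun h i)

theorem hull_subset_posR {r : ℕ} (B : Finset (Fin r → ℚ)) :
    (PointedCone.hull ℝ (castQR '' (B : Set (Fin r → ℚ))) : Set (Fin r → ℝ)) ⊆ posR B := by
  intro y hy
  rw [SetLike.mem_coe, ← Finset.coe_image, mem_span_finset] at hy
  obtain ⟨f, -, rfl⟩ := hy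
  refine ⟨fun b => f (castQR b), fun b => (f _).2, ?_⟩
  rw [Finset.sum_image fun _ _ _ _ h => castQR_injective h]
  rfl

theorem posR_subset_nonneg {r : ℕ} {B : Finset (Fin r → ℚ)} (hB : ∀ v ∈ B, ∀ k, 0 ≤ v k) :
    posR B ⊆ {y | ∀ k, 0 ≤ y k} := by
  rintro _ ⟨c, hc, rfl⟩ k
  simp only [Finset.sum_apply, Pi.smul_apply, smul_eq_mul, castQR_apply]
  exact Finset.sum_nonneg fun b hb => mul_nonneg (hc b) (by exact_mod_cast hB b hb k)

theorem map_nonneg_of_mem_posR {r : ℕ} {B : Finset (Fin r → ℚ)}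
    (φ : (Fin r → ℝ) →ₗ[ℝ] ℝ) (hB : ∀ b ∈ B, 0 ≤ φ (castQR b)) {y : Fin r → ℝ}
    (hy : y ∈ posR B) : 0 ≤ φ y := by
  obtain ⟨c, hc, rfl⟩ := hy
  simp only [map_sum, map_smul, smul_eq_mul]
  exact Finset.sum_nonneg fun b hb => mul_nonneg (hc b) (hB b hb)

def latticeN (l r : ℕ) : Submodule ℤ (Fin r → ℚ) :=
  span ℤ (Set.range fun i => Pi.single i 1) ⊔ ℤ ∙ wgt l r

theorem mem_latticeN {r : ℕ} {v : Fin r → ℚ} : v ∈ latticeN l r ↔ memN l r v := by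
  have hint (a : Fin r → ℤ) : ∑ i, a i • (Pi.single i 1 : Fin r → ℚ) = fun i => (a i : ℚ) := by
    ext i
    simp [Finset.sum_apply, Pi.single_apply]
  simp only [latticeN, mem_sup, mem_span_range_iff_exists_fun, mem_span_singleton]
  constructor
  · rintro ⟨_, ⟨a, rfl⟩, _, ⟨c, rfl⟩, rfl⟩
    exact ⟨a, c, by rw [hint]⟩
  · rintro ⟨a, c, rfl⟩
    exact ⟨_, ⟨a, hint a⟩, _, ⟨c, rfl⟩, rfl⟩

theorem coe_latticeN {r : ℕ} : (latticeN l r : Set (Fin r → ℚ)) = {v | memN l r v} :=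
  Set.ext fun _ => mem_latticeN

theorem single_mem_latticeN {r : ℕ} (i : Fin r) : Pi.single i 1 ∈ latticeN l r :=
  mem_sup_left (subset_span ⟨i, rfl⟩)

theorem wgt_mem_latticeN {r : ℕ} : wgt l r ∈ latticeN l r :=
  mem_sup_right (mem_span_singleton_self _)

theorem latticeN_le_iff {r : ℕ} {S : Submodule ℤ (Fin r → ℚ)} :
    latticeN l r ≤ S ↔ (∀ i, Pi.single i 1 ∈ S) ∧ wgt l r ∈ S := by
  simp [latticeN, span_le, Set.range_subset_iff]

@[simp]
theorem wgt_castSucc (i : Fin n) : wgt l (n + 1) i.castSucc = 1 / l := by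
  simp [wgt, i.isLt.ne]

@[simp]
theorem wgt_last : wgt l (n + 1) (last n) = (l - n) / l := by
  simp [wgt]

theorem natCast_smul_wgt (hl : 0 < l) :
    (l : ℤ) • wgt l (n + 1) =
      ∑ i : Fin n, Pi.single i.castSucc 1 + ((l : ℤ) - n) • Pi.single (last n) 1 := by
  ext i
  induction i using Fin.lastCases with
  | last => simp [Finset.sum_apply]; field_simp
  | cast i => simp [Finset.sum_apply, Pi.single_apply, (castSucc_lt_last i).ne]; field_simp

theorem single_castSucc_mem_of_wgt_mem (hl : 0 < l) {S : Submodule ℤ (Fin (n + 1) → ℚ)}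
    {j : Fin n} (hlast : Pi.single (last n) 1 ∈ S) (hw : wgt l (n + 1) ∈ S)
    (hS : ∀ i ≠ j, Pi.single i.castSucc 1 ∈ S) : Pi.single j.castSucc 1 ∈ S := by
  have hrest : ∑ i ∈ Finset.univ.erase j, Pi.single i.castSucc 1 ∈ S :=
    sum_mem fun i hi => hS i (Finset.ne_of_mem_erase hi)
  have : Pi.single j.castSucc 1 = (l : ℤ) • wgt l (n + 1) - ((l : ℤ) - n) • Pi.single (last n) 1
      - ∑ i ∈ Finset.univ.erase j, Pi.single i.castSucc 1 := by
    rw [natCast_smul_wgt hl, ← Finset.add_sum_erase _ _ (Finset.mem_univ j)]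
    abel
  rw [this]
  exact sub_mem (sub_mem (zsmul_mem hw _) (zsmul_mem hlast _)) hrest

/-- The lattice point `(k/l, …, k/l, (l - n k)/l)` of the hyperplane `∑ yᵢ = 1`. -/
def juniorPt (l n k : ℕ) : Fin (n + 1) → ℚ :=
  (k : ℤ) • wgt l (n + 1) + (1 - k : ℤ) • Pi.single (last n) 1

@[simp]
theorem juniorPt_castSucc (k : ℕ) (i : Fin n) : juniorPt l n k i.castSucc = k / l := by
  simp [juniorPt, (castSucc_lt_last i).ne, div_eq_mul_inv]

theorem juniorPt_last (hl : 0 < l) (k : ℕ) : juniorPt l n k (last n) = (l - n * k) / l := by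
  simp [juniorPt]
  field_simp
  ring

theorem juniorPt_mem_latticeN (k : ℕ) : juniorPt l n k ∈ latticeN l (n + 1) :=
  add_mem (zsmul_mem wgt_mem_latticeN _) (zsmul_mem (single_mem_latticeN _) _)

theorem sum_juniorPt (hl : 0 < l) (k : ℕ) : ∑ i, juniorPt l n k i = 1 := by
  simp [Fin.sum_univ_castSucc, juniorPt_last hl]
  field_simp
  ring

theorem juniorPt_nonneg (hl : 0 < l) {k : ℕ} (hk : n * k ≤ l) (i : Fin (n + 1)) :
    0 ≤ juniorPt l n k i := by
  induction i using Fin.lastCases with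
  | last =>
    rw [juniorPt_last hl]
    have : (n * k : ℚ) ≤ l := by exact_mod_cast hk
    exact div_nonneg (by linarith) l.cast_nonneg
  | cast i => rw [juniorPt_castSucc]; positivity

theorem eq_juniorPt_of_castSucc (hl : 0 < l) {v : Fin (n + 1) → ℚ} {k : ℕ}
    (hv : ∀ i : Fin n, v i.castSucc = k / l) (h1 : ∑ i, v i = 1) : v = juniorPt l n k := by
  have hlast : v (last n) = juniorPt l n k (last n) := by
    have := sum_juniorPt (n := n) hl k
    rw [Fin.sum_univ_castSucc] at h1 this
    simp only [hv, juniorPt_castSucc] at h1 this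
    linarith
  ext i
  induction i using Fin.lastCases with
  | last => exact hlast
  | cast i => rw [hv, juniorPt_castSucc]

/-- `v` is a point of the junior simplex `s_G ∩ N`. -/
def IsJunior (l r : ℕ) (v : Fin r → ℚ) : Prop :=
  memN l r v ∧ (∀ k, 0 ≤ v k) ∧ ∑ k, v k = 1

theorem isJunior_single {r : ℕ} (i : Fin r) : IsJunior l r (Pi.single i 1) :=
  ⟨mem_latticeN.1 (single_mem_latticeN i),
    (Pi.single_nonneg.2 zero_le_one : (0 : Fin r → ℚ) ≤ Pi.single i 1), by simp⟩

theorem isJunior_juniorPt (hl : 0 < l) {k : ℕ} (hk : n * k ≤ l) :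
    IsJunior l (n + 1) (juniorPt l n k) :=
  ⟨mem_latticeN.1 (juniorPt_mem_latticeN k), juniorPt_nonneg hl hk, sum_juniorPt hl k⟩

theorem IsJunior.eq_single_or_eq_juniorPt (hl : 0 < l) {v : Fin (n + 1) → ℚ}
    (hv : IsJunior l (n + 1) v) :
    (∃ j : Fin n, v = Pi.single j.castSucc 1) ∨ ∃ k, n * k ≤ l ∧ v = juniorPt l n k := by
  obtain ⟨⟨a, c, hac⟩, h0, h1⟩ := hv
  by_cases hbig : ∃ j : Fin n, 1 ≤ v j.castSucc
  · obtain ⟨j, hj⟩ := hbig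
    exact .inl ⟨j, eq_single_of_sum_eq_one h0 h1 hj⟩
  push Not at hbig
  right
  obtain ⟨k, hk⟩ : ∃ k : ℕ, (k : ℤ) = c % l :=
    ⟨(c % l).toNat, Int.toNat_of_nonneg (Int.emod_nonneg _ (by omega))⟩
  have hcoord (i : Fin n) : v i.castSucc = k / l := by
    have hfract : Int.fract ((c : ℚ) / l) = v i.castSucc := by
      refine Int.fract_eq_iff.2 ⟨h0 _, hbig i, -a i.castSucc, ?_⟩
      rw [hac]
      simp
      ring
    rw [← hfract, Int.fract_div_intCast_eq_div_intCast_mod, ← hk, Int.cast_natCast]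
  have hv := eq_juniorPt_of_castSucc hl hcoord h1
  refine ⟨k, ?_, hv⟩
  have hlast := h0 (last n)
  rw [hv, juniorPt_last hl, le_div_iff₀ (by positivity)] at hlast
  exact_mod_cast (by linarith : (n * k : ℚ) ≤ l)

def sliceCone (l n : ℕ) (j : Fin n) (k : ℕ) : Finset (Fin (n + 1) → ℚ) :=
  insert (juniorPt l n k) <| insert (juniorPt l n (k + 1)) <|
    (Finset.univ.erase j).image fun i => Pi.single i.castSucc 1

def capCone (l n k : ℕ) : Finset (Fin (n + 1) → ℚ) :=
  insert (juniorPt l n k) <| Finset.univ.image fun i : Fin n => Pi.single i.castSucc 1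

theorem single_castSucc_mem_sliceCone {i j : Fin n} (hi : i ≠ j) (k : ℕ) :
    Pi.single i.castSucc 1 ∈ sliceCone l n j k :=
  Finset.mem_insert_of_mem <| Finset.mem_insert_of_mem <|
    Finset.mem_image_of_mem _ (Finset.mem_erase.2 ⟨hi, Finset.mem_univ i⟩)

theorem single_castSucc_mem_capCone (i : Fin n) (k : ℕ) :
    Pi.single i.castSucc 1 ∈ capCone l n k :=
  Finset.mem_insert_of_mem (Finset.mem_image_of_mem _ (Finset.mem_univ i))

theorem card_sliceCone_le (j : Fin n) (k : ℕ) : (sliceCone l n j k).card ≤ n + 1 := by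
  refine (Finset.card_insert_le _ _).trans <| Nat.succ_le_succ <|
    (Finset.card_insert_le _ _).trans ?_
  have := Finset.card_image_le (s := Finset.univ.erase j)
    (f := fun i => (Pi.single i.castSucc 1 : Fin (n + 1) → ℚ))
  rw [Finset.card_erase_of_mem (Finset.mem_univ j), Finset.card_univ, Fintype.card_fin] at this
  have := j.isLt
  omega

theorem card_capCone_le (k : ℕ) : (capCone l n k).card ≤ n + 1 := by
  refine (Finset.card_insert_le _ _).trans (Nat.succ_le_succ ?_)
  simpa using Finset.card_image_le (s := (Finset.univ : Finset (Fin n)))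
    (f := fun i => (Pi.single i.castSucc 1 : Fin (n + 1) → ℚ))

theorem latticeN_le_span_sliceCone (hl : 0 < l) (j : Fin n) (k : ℕ) :
    latticeN l (n + 1) ≤ span ℤ (sliceCone l n j k : Set _) := by
  set S := span ℤ (sliceCone l n j k : Set (Fin (n + 1) → ℚ))
  have hP : juniorPt l n k ∈ S := subset_span (by simp [sliceCone])
  have hP' : juniorPt l n (k + 1) ∈ S := subset_span (by simp [sliceCone])
  have hlast : Pi.single (last n) 1 ∈ S := by
    have : Pi.single (last n) 1 =
        ((k : ℤ) + 1) • juniorPt l n k - (k : ℤ) • juniorPt l n (k + 1) := by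
      simp only [juniorPt]
      push_cast
      module
    rw [this]
    exact sub_mem (zsmul_mem hP _) (zsmul_mem hP' _)
  have hw : wgt l (n + 1) ∈ S := by
    have : wgt l (n + 1) = juniorPt l n (k + 1) - juniorPt l n k + Pi.single (last n) 1 := by
      simp only [juniorPt]
      push_cast
      module
    rw [this]
    exact add_mem (sub_mem hP' hP) hlast
  have hS (i : Fin n) (hi : i ≠ j) : Pi.single i.castSucc 1 ∈ S :=
    subset_span (single_castSucc_mem_sliceCone hi k)
  refine latticeN_le_iff.2 ⟨fun i => ?_, hw⟩
  induction i using Fin.lastCases with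
  | last => exact hlast
  | cast i =>
    by_cases hi : i = j
    · exact hi ▸ single_castSucc_mem_of_wgt_mem hl hlast hw hS
    · exact hS i hi

theorem latticeN_le_span_capCone {k : ℕ} (hl : l = n * k + 1) :
    latticeN l (n + 1) ≤ span ℤ (capCone l n k : Set _) := by
  set S := span ℤ (capCone l n k : Set (Fin (n + 1) → ℚ))
  have hP : juniorPt l n k ∈ S := subset_span (Finset.mem_insert_self _ _)
  have hS (i : Fin n) : Pi.single i.castSucc 1 ∈ S := subset_span (single_castSucc_mem_capCone i k)
  have hu : ∑ i : Fin n, Pi.single i.castSucc 1 ∈ S := sum_mem fun i _ => hS i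
  have hlw := natCast_smul_wgt (n := n) (by omega : 0 < l)
  rw [show (l : ℤ) = n * k + 1 by exact_mod_cast hl] at hlw
  have hlast : Pi.single (last n) 1 ∈ S := by
    have : Pi.single (last n) 1 =
        (n * k + 1 : ℤ) • juniorPt l n k - (k : ℤ) • ∑ i : Fin n, Pi.single i.castSucc 1 := by
      simp only [juniorPt]
      linear_combination (norm := module) -(k : ℤ) • hlw
    rw [this]
    exact sub_mem (zsmul_mem hP _) (zsmul_mem hu _)
  have hw : wgt l (n + 1) ∈ S := by
    have : wgt l (n + 1) = ∑ i : Fin n, Pi.single i.castSucc 1 + Pi.single (last n) 1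
        - (n : ℤ) • juniorPt l n k := by
      simp only [juniorPt]
      linear_combination (norm := module) hlw
    rw [this]
    exact sub_mem (add_mem hu hlast) (zsmul_mem hP _)
  refine latticeN_le_iff.2 ⟨fun i => ?_, hw⟩
  induction i using Fin.lastCases with
  | last => exact hlast
  | cast i => exact hS i

theorem eq_mul_add_one_of_latticeN_le_span_capCone (hn : 1 ≤ n) (hl : 0 < l) {k : ℕ}
    (hk : n * k ≤ l) (hN : latticeN l (n + 1) ≤ span ℤ (capCone l n k : Set _)) :
    l = n * k + 1 := by
  -- `φ v = d v₀ - k vₙ` vanishes on `juniorPt l n k` and on every `eᵢ` with `0 < i < n`, and is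
  -- `d = l - n k` on `e₀`; since `φ (eₙ - wgt) = -1`, `d` divides `1`.
  set d : ℚ := l - n * k
  let j₀ : Fin n := ⟨0, hn⟩
  let φ : (Fin (n + 1) → ℚ) →ₗ[ℤ] ℚ :=
    ((d • LinearMap.proj j₀.castSucc - (k : ℚ) • LinearMap.proj (last n) :
      (Fin (n + 1) → ℚ) →ₗ[ℚ] ℚ)).restrictScalars ℤ
  have hφ : span ℤ (capCone l n k : Set _) ≤ (ℤ ∙ d).comap φ := by
    rw [span_le]
    simp only [capCone, Finset.coe_insert, Finset.coe_image, Finset.coe_univ, Set.image_univ,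
      Set.insert_subset_iff, Set.range_subset_iff]
    refine ⟨mem_span_singleton.2 ⟨0, ?_⟩,
      fun j => mem_span_singleton.2 ⟨if j = j₀ then 1 else 0, ?_⟩⟩
    · simp [φ, d, juniorPt_last hl]
      field_simp
      ring
    · by_cases hj : j = j₀ <;> simp [φ, hj]
  have hmem : Pi.single (last n) 1 - wgt l (n + 1) ∈ latticeN l (n + 1) :=
    sub_mem (single_mem_latticeN _) wgt_mem_latticeN
  obtain ⟨m, hm⟩ := mem_span_singleton.1 (hφ (hN hmem))
  have hmd : m * ((l : ℤ) - n * k) = -1 := by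
    have : (m : ℚ) * d = -1 := by
      rw [← zsmul_eq_mul, hm]
      simp [φ, d, (castSucc_lt_last j₀).ne]
      field_simp
      ring
    exact_mod_cast (show (m : ℚ) * (l - n * k) = -1 from this)
  rcases Int.eq_one_or_neg_one_of_mul_eq_neg_one' hmd with h | h <;> omega

def IsJuniorBasis (l r : ℕ) (B : Finset (Fin r → ℚ)) : Prop :=
  B.card = r ∧ (∀ v ∈ B, IsJunior l r v) ∧
    LinearIndependent ℤ (fun v : (B : Set (Fin r → ℚ)) => (v : Fin r → ℚ)) ∧
    (span ℤ (B : Set (Fin r → ℚ)) : Set (Fin r → ℚ)) = {v | memN l r v}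

theorem isJuniorBasis_of_latticeN_le {r : ℕ} {B : Finset (Fin r → ℚ)}
    (hJ : ∀ v ∈ B, IsJunior l r v) (hN : latticeN l r ≤ span ℤ (B : Set _)) (hcard : B.card ≤ r) :
    IsJuniorBasis l r B := by
  obtain ⟨hcard', hli⟩ :=
    card_eq_and_linearIndependent_of_single_mem_span (fun i => hN (single_mem_latticeN i)) hcard
  refine ⟨hcard', hJ, hli, ?_⟩
  rw [← coe_latticeN, le_antisymm (span_le.2 fun v hv => mem_latticeN.2 (hJ v hv).1) hN]

theorem isJuniorBasis_sliceCone (hl : 0 < l) (j : Fin n) {k : ℕ} (hk : k < l / n) :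
    IsJuniorBasis l (n + 1) (sliceCone l n j k) := by
  have hk' : n * (k + 1) ≤ l := by
    rw [mul_comm]
    exact (Nat.le_div_iff_mul_le (Nat.zero_lt_of_lt j.isLt)).1 hk
  refine isJuniorBasis_of_latticeN_le ?_ (latticeN_le_span_sliceCone hl j k)
    (card_sliceCone_le j k)
  simp only [sliceCone, Finset.mem_insert, Finset.mem_image]
  rintro v (rfl | rfl | ⟨i, -, rfl⟩)
  · exact isJunior_juniorPt hl (le_trans (Nat.mul_le_mul_left n k.le_succ) hk')
  · exact isJunior_juniorPt hl hk'
  · exact isJunior_single _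

theorem isJuniorBasis_capCone {k : ℕ} (hl : l = n * k + 1) :
    IsJuniorBasis l (n + 1) (capCone l n k) := by
  refine isJuniorBasis_of_latticeN_le ?_ (latticeN_le_span_capCone hl) (card_capCone_le k)
  simp only [capCone, Finset.mem_insert, Finset.mem_image]
  rintro v (rfl | ⟨i, -, rfl⟩)
  · exact isJunior_juniorPt (by omega) (by omega)
  · exact isJunior_single _

theorem exists_eq_capCone (hl : 0 < l) {B : Finset (Fin (n + 1) → ℚ)} (hcard : B.card = n + 1)
    (hJ : ∀ v ∈ B, IsJunior l (n + 1) v) (hsingle : ∀ j : Fin n, Pi.single j.castSucc 1 ∈ B) :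
    ∃ k, n * k ≤ l ∧ B = capCone l n k := by
  set E := Finset.univ.image fun j : Fin n => (Pi.single j.castSucc 1 : Fin (n + 1) → ℚ)
  have hEB : E ⊆ B := by
    intro v hv
    obtain ⟨j, -, rfl⟩ := Finset.mem_image.1 hv
    exact hsingle j
  have hEcard : E.card = n := by
    have hinj : Function.Injective fun j : Fin n => (Pi.single j.castSucc 1 : Fin (n + 1) → ℚ) :=
      by simpa [Function.comp_def] using
        (Pi.basisFun ℚ (Fin (n + 1))).injective.comp (castSucc_injective n)
    rw [Finset.card_image_of_injective _ hinj, Finset.card_univ, Fintype.card_fin]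
  obtain ⟨v₀, hv₀⟩ : ∃ v₀, B \ E = {v₀} := by
    rw [← Finset.card_eq_one, Finset.card_sdiff_of_subset hEB, hcard, hEcard]
    simp
  obtain ⟨hv₀B, hv₀E⟩ := Finset.mem_sdiff.1 (hv₀ ▸ Finset.mem_singleton_self v₀)
  have hB : B = insert v₀ E := by
    rw [← Finset.sdiff_union_of_subset hEB, hv₀, Finset.singleton_union]
  obtain ⟨k, hk, rfl⟩ : ∃ k, n * k ≤ l ∧ v₀ = juniorPt l n k := by
    refine ((hJ v₀ hv₀B).eq_single_or_eq_juniorPt hl).resolve_left ?_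
    rintro ⟨j, rfl⟩
    exact hv₀E (Finset.mem_image_of_mem _ (Finset.mem_univ j))
  exact ⟨k, hk, hB⟩

theorem mul_apply_le_of_single_notMem_of_mem_posR (hl : 0 < l) {B : Finset (Fin (n + 1) → ℚ)}
    (hJ : ∀ v ∈ B, IsJunior l (n + 1) v) {j : Fin n} (hj : Pi.single j.castSucc 1 ∉ B)
    {y : Fin (n + 1) → ℝ} (hy : y ∈ posR B) :
    l * y j.castSucc ≤ (l / n : ℕ) * ∑ i, y i := by
  let φ : (Fin (n + 1) → ℝ) →ₗ[ℝ] ℝ :=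
    ((l / n : ℕ) : ℝ) • ∑ i, LinearMap.proj i - (l : ℝ) • LinearMap.proj j.castSucc
  have key := map_nonneg_of_mem_posR φ (fun b hb => ?_) hy
  · simpa [φ, sub_nonneg] using key
  have hb : (l : ℚ) * b j.castSucc ≤ (l / n : ℕ) * ∑ i, b i := by
    rw [(hJ b hb).2.2, mul_one]
    rcases (hJ b hb).eq_single_or_eq_juniorPt hl with ⟨i, rfl⟩ | ⟨k, hk, rfl⟩
    · have hij : i ≠ j := by
        rintro rfl
        exact hj hb
      simp [hij]
    · rw [juniorPt_castSucc, mul_div_cancel₀ _ (by positivity)]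
      exact_mod_cast (Nat.le_div_iff_mul_le (Nat.zero_lt_of_lt j.isLt)).2 (by linarith)
  simpa [φ, sub_nonneg] using (by exact_mod_cast hb : ((l : ℚ) * b j.castSucc : ℝ) ≤ _)

theorem mod_le_one_of_cover (hn : 1 ≤ n) (hl : 0 < l) {m : ℕ}
    {B : Fin m → Finset (Fin (n + 1) → ℚ)} (hcard : ∀ i, (B i).card = n + 1)
    (hJ : ∀ i, ∀ v ∈ B i, IsJunior l (n + 1) v)
    (hN : ∀ i, latticeN l (n + 1) ≤ span ℤ (B i : Set _))
    (hcover : {y : Fin (n + 1) → ℝ | ∀ k, 0 ≤ y k} ⊆ ⋃ i, posR (B i)) : l % n ≤ 1 := by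
  by_contra! h
  have hl1 : (1 : ℝ) ≤ l := by exact_mod_cast hl
  let q : Fin (n + 1) → ℝ := fun i => if i = last n then n else l - 1
  have hq : q ∈ {y | ∀ k, 0 ≤ y k} := by
    intro k
    dsimp only [q]
    split_ifs <;> linarith [(n.cast_nonneg : (0 : ℝ) ≤ n)]
  obtain ⟨i, hqi⟩ := Set.mem_iUnion.1 (hcover hq)
  have hsingle (j : Fin n) : Pi.single j.castSucc 1 ∈ B i := by
    by_contra hj
    have hle := mul_apply_le_of_single_notMem_of_mem_posR hl (hJ i) hj hqi
    have hsum : ∑ i, q i = l * n := by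
      simp [q, Fin.sum_univ_castSucc, (castSucc_lt_last _).ne]
      ring
    simp only [q, (castSucc_lt_last j).ne, if_false, hsum] at hle
    have : (l : ℝ) - 1 ≤ (l / n : ℕ) * n := by nlinarith
    have : l ≤ l / n * n + 1 := by exact_mod_cast (by linarith : (l : ℝ) ≤ (l / n : ℕ) * n + 1)
    have := Nat.div_add_mod' l n
    omega
  obtain ⟨k, hk, hBk⟩ := exists_eq_capCone hl (hcard i) (hJ i) hsingle
  have := eq_mul_add_one_of_latticeN_le_span_capCone hn hl hk (hBk ▸ hN i)
  rw [this, Nat.mul_add_mod] at h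
  exact absurd (Nat.mod_le 1 n) (by omega)

theorem mem_posR_sliceCone (hl : 0 < l) {y : Fin (n + 1) → ℝ} {j : Fin n} {k : ℕ}
    (hmin : ∀ i : Fin n, y j.castSucc ≤ y i.castSucc)
    (hk : 0 ≤ (l - n * k) * y j.castSucc - k * y (last n))
    (hk1 : (l - n * (k + 1)) * y j.castSucc - (k + 1) * y (last n) ≤ 0) :
    y ∈ posR (sliceCone l n j k) := by
  set t := y j.castSucc
  set z := y (last n)
  have hy : y = ∑ i ∈ Finset.univ.erase j, (y i.castSucc - t) • castQR (Pi.single i.castSucc 1)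
      + ((k + 1) * z - (l - n * (k + 1)) * t) • castQR (juniorPt l n k)
      + ((l - n * k) * t - k * z) • castQR (juniorPt l n (k + 1)) := by
    ext i
    induction i using Fin.lastCases with
    | last =>
      simp [Finset.sum_apply, juniorPt_last hl, (castSucc_lt_last _).ne]
      field_simp
      ring
    | cast i =>
      by_cases hi : i = j
      · subst hi
        simp [Finset.sum_apply, Pi.single_apply]
        field_simp
        ring
      · simp [Finset.sum_apply, Pi.single_apply, hi]
        field_simp
        ring
  apply hull_subset_posR
  rw [hy]
  refine add_mem (add_mem (sum_mem fun i hi => ?_) ?_) ?_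
  · exact PointedCone.smul_mem _ (sub_nonneg.2 (hmin i)) (PointedCone.subset_hull
      ⟨_, single_castSucc_mem_sliceCone (Finset.ne_of_mem_erase hi) k, rfl⟩)
  · exact PointedCone.smul_mem _ (by linarith)
      (PointedCone.subset_hull ⟨_, by simp [sliceCone], rfl⟩)
  · exact PointedCone.smul_mem _ hk (PointedCone.subset_hull ⟨_, by simp [sliceCone], rfl⟩)

theorem mem_posR_capCone {k : ℕ} (hl : l = n * k + 1) {y : Fin (n + 1) → ℝ}
    (hz : 0 ≤ y (last n)) (hbig : ∀ i : Fin n, k * y (last n) ≤ y i.castSucc) :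
    y ∈ posR (capCone l n k) := by
  set z := y (last n)
  have hlR : (l : ℝ) = n * k + 1 := by exact_mod_cast hl
  have hl0 : (l : ℝ) ≠ 0 := by
    rw [hlR]
    positivity
  have hy : y = ∑ i : Fin n, (y i.castSucc - k * z) • castQR (Pi.single i.castSucc 1)
      + (l * z) • castQR (juniorPt l n k) := by
    ext i
    induction i using Fin.lastCases with
    | last =>
      simp [Finset.sum_apply, juniorPt_last (by omega : 0 < l), (castSucc_lt_last _).ne]
      field_simp
      rw [hlR]
      ring
    | cast i =>
      simp [Finset.sum_apply, Pi.single_apply]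
      field_simp
      ring
  apply hull_subset_posR
  rw [hy]
  refine add_mem (sum_mem fun i _ => ?_) ?_
  · exact PointedCone.smul_mem _ (sub_nonneg.2 (hbig i))
      (PointedCone.subset_hull ⟨_, single_castSucc_mem_capCone i k, rfl⟩)
  · exact PointedCone.smul_mem _ (by positivity)
      (PointedCone.subset_hull ⟨_, Finset.mem_insert_self _ _, rfl⟩)

theorem exists_mem_posR_sliceCone_or_capCone (hn : 1 ≤ n) (hl : n ≤ l) (hmod : l % n ≤ 1)
    {y : Fin (n + 1) → ℝ} (hy : ∀ k, 0 ≤ y k) :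
    (∃ j : Fin n, ∃ k < l / n, y ∈ posR (sliceCone l n j k)) ∨
      (l % n = 1 ∧ y ∈ posR (capCone l n (l / n))) := by
  have hK : 0 < l / n := Nat.div_pos hl hn
  have hdiv := Nat.div_add_mod l n
  obtain ⟨j, -, hj⟩ := Finset.univ.exists_min_image (fun i : Fin n => y i.castSucc)
    ⟨⟨0, hn⟩, Finset.mem_univ _⟩
  let f : ℕ → ℝ := fun a => (l - n * a) * y j.castSucc - a * y (last n)
  by_cases hfK : f (l / n - 1 + 1) ≤ 0
  · obtain ⟨k, hk, hk0, hk1⟩ := exists_nonneg_nonpos_succ f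
      (by simpa [f] using mul_nonneg l.cast_nonneg (hy j.castSucc)) hfK
    exact .inl ⟨j, k, by omega, mem_posR_sliceCone (by omega) (fun i => hj i (Finset.mem_univ i))
      hk0 (by simpa [f] using hk1)⟩
  rw [Nat.sub_add_cancel hK] at hfK
  have hmod1 : l % n = 1 := by
    by_contra h
    have hlK : (l : ℝ) = n * (l / n : ℕ) := by exact_mod_cast (by omega : l = n * (l / n))
    have := mul_nonneg (Nat.cast_nonneg (l / n) : (0 : ℝ) ≤ _) (hy (last n))
    simp only [f, ← hlK, sub_self, zero_mul] at hfK
    linarith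
  have hl1 : l = n * (l / n) + 1 := by omega
  have hlK : (l : ℝ) - n * (l / n : ℕ) = 1 := by
    have : (l : ℝ) = n * (l / n : ℕ) + 1 := by exact_mod_cast hl1
    linarith
  refine .inr ⟨hmod1, mem_posR_capCone hl1 (hy _) fun i => ?_⟩
  simp only [f, hlK, one_mul, not_le, sub_pos] at hfK
  linarith [hj i (Finset.mem_univ i)]

theorem exists_juniorBasis_cover (hn : 1 ≤ n) (hl : n ≤ l) (hmod : l % n ≤ 1) :
    ∃ S : Finset (Finset (Fin (n + 1) → ℚ)), (∀ B ∈ S, IsJuniorBasis l (n + 1) B) ∧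
      {y | ∀ k, 0 ≤ y k} ⊆ ⋃ B ∈ S, posR B := by
  let slices := (Finset.univ ×ˢ Finset.range (l / n)).image
    fun p : Fin n × ℕ => sliceCone l n p.1 p.2
  have hslices : ∀ B ∈ slices, IsJuniorBasis l (n + 1) B := by
    intro B hB
    obtain ⟨⟨j, k⟩, hjk, rfl⟩ := Finset.mem_image.1 hB
    exact isJuniorBasis_sliceCone (by omega) j (Finset.mem_range.1 (Finset.mem_product.1 hjk).2)
  have hmem {j : Fin n} {k : ℕ} (hk : k < l / n) : sliceCone l n j k ∈ slices :=
    Finset.mem_image.2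
      ⟨(j, k), Finset.mem_product.2 ⟨Finset.mem_univ j, Finset.mem_range.2 hk⟩, rfl⟩
  by_cases hmod1 : l % n = 1
  · refine ⟨insert (capCone l n (l / n)) slices, ?_, fun y hy => ?_⟩
    · simp only [Finset.forall_mem_insert]
      exact ⟨isJuniorBasis_capCone (by have := Nat.div_add_mod l n; omega), hslices⟩
    rcases exists_mem_posR_sliceCone_or_capCone hn hl hmod hy with ⟨j, k, hk, hyB⟩ | ⟨-, hyB⟩
    · exact Set.mem_biUnion (Finset.mem_insert_of_mem (hmem hk)) hyB
    · exact Set.mem_biUnion (Finset.mem_insert_self _ _) hyB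
  · refine ⟨slices, hslices, fun y hy => ?_⟩
    rcases exists_mem_posR_sliceCone_or_capCone hn hl hmod hy with ⟨j, k, hk, hyB⟩ | ⟨h, -⟩
    · exact Set.mem_biUnion (hmem hk) hyB
    · exact absurd h hmod1

end JuniorSimplex

open JuniorSimplex

/-- **Existence criterion for crepant full resolutions of the series
`(1/l)(1,…,1,l−(r−1))`.**  The positive orthant can be covered by cones over
`r`-element subsets of `s_G ∩ N` which are `ℤ`-bases of the lattice `N`
(i.e. the junior simplex admits a basic triangulation) if and only if
`l ≡ 0` or `l ≡ 1 (mod r−1)`. -/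
theorem basic_cover_iff_residue_condition (l r : ℕ) (hr : 2 ≤ r) (hl : r ≤ l) :
    (∃ (m : ℕ) (B : Fin m → Finset (Fin r → ℚ)),
        (∀ i, (B i).card = r) ∧
        (∀ i, ∀ v ∈ B i, memN l r v ∧ (∀ k, 0 ≤ v k) ∧ ∑ k, v k = 1) ∧
        (∀ i, LinearIndependent ℤ
            (fun v : ((B i : Set (Fin r → ℚ))) => (v : Fin r → ℚ))) ∧
        (∀ i, (Submodule.span ℤ ((B i : Set (Fin r → ℚ))) : Set (Fin r → ℚ))
            = {v | memN l r v}) ∧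
        {y : Fin r → ℝ | ∀ k, 0 ≤ y k} = ⋃ i, posR (B i))
      ↔ (l % (r - 1) = 0 ∨ l % (r - 1) = 1) := by
  obtain ⟨n, rfl⟩ : ∃ n, r = n + 1 := ⟨r - 1, by omega⟩
  rw [Nat.add_sub_cancel, ← Nat.le_one_iff_eq_zero_or_eq_one]
  constructor
  · rintro ⟨m, B, hcard, hJ, -, hspan, hcover⟩
    refine mod_le_one_of_cover (by omega) (by omega) hcard hJ (fun i => ?_) hcover.subset
    rw [← SetLike.coe_subset_coe, hspan i, coe_latticeN]
  · intro hmod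
    obtain ⟨S, hS, hcover⟩ := exists_juniorBasis_cover (by omega) (by omega) hmod
    obtain ⟨m, B, hBS, hU⟩ := S.exists_fin_iUnion_eq_biUnion posR
    have hB i := hS _ (hBS i)
    refine ⟨m, B, fun i => (hB i).1, fun i => (hB i).2.1, fun i => (hB i).2.2.1,
      fun i => (hB i).2.2.2, ?_⟩
    refine (hcover.trans hU.ge).antisymm (Set.iUnion_subset fun i => posR_subset_nonneg ?_)
    exact fun v hv => ((hB i).2.1 v hv).2.1
end
end

section
/- For the singularity of type (1/l)(1,…,1,l−(r−1)), the Hilbert basis of the positive orthant consists exactly of the lattice points of the junior simplex if and only if l ≡ 0 (mod r−1) or l ≡ 1 (mod r−1): Hlb_N(σ0) = s_G ∩ N ⇔ [l]_{r−1} ∈ {0,1}. -/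
noncomputable section

/-!
Every point of `σ0 ∩ N` with all coordinates in `[0, 1)` is the fractional part `f k` of `k • w`
for a unique `0 ≤ k < l`, where `w` is the generator of `N` over `ℤ^r`; explicitly
`f k = (k/l, …, k/l, g k / l)` with `g k = lastNum l (r-1) k = k (l - (r-1)) mod l`, so that
`f j ≤ f k` iff `j ≤ k` and `g j ≤ g k`. A point with a coordinate `≥ 1` splits off a unit vector, and a nonzero lattice point
has integral coordinate sum `≥ 1`. Hence the Hilbert basis is the junior points together with the
`f k` of coordinate sum `≥ 2` that dominate no `f j` with `0 < j < k`.

Let `t = l mod (r-1)` and `q = ⌊l/(r-1)⌋`, so that `g q = t` and `f q` lies on the junior simplex.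
If `t ≤ 1`, every `f k` of sum `≥ 2` has `k > q` and dominates `f q` (for `t = 1`, `l` is coprime to
`r - 1`, so `g k ≠ 0`). If `t ≥ 2`, some `0 < k < l` has `g k ≤ 1 < t`; the least such `k` gives an
element `f k` of the Hilbert basis off the junior simplex, since on the junior simplex
`g k = l - k(r-1) ≡ t mod (r-1)`, whence `g k ≥ t`.
-/

namespace CyclicQuotient

theorem exists_pos_lt_mul_mod_le_one {l : ℕ} (hl : 2 ≤ l) (n : ℕ) :
    ∃ k, 0 < k ∧ k < l ∧ k * n % l ≤ 1 := by
  by_cases hcop : Nat.Coprime n l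
  · obtain ⟨k, hkl, hk⟩ := Nat.exists_mul_mod_eq_one_of_coprime hcop hl
    refine ⟨k, Nat.pos_of_ne_zero ?_, hkl, by rw [mul_comm, hk]⟩
    rintro rfl
    simp at hk
  · have hd : 2 ≤ l.gcd n := by
      have hd0 := Nat.gcd_pos_of_pos_left n (by omega : 0 < l)
      have hd1 : l.gcd n ≠ 1 := fun h => hcop (Nat.coprime_comm.mp h)
      omega
    obtain ⟨a, ha⟩ := Nat.gcd_dvd_left l n
    obtain ⟨b, hb⟩ := Nat.gcd_dvd_right l n
    generalize l.gcd n = d at hd ha hb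
    subst ha hb
    have ha0 : 0 < a := Nat.pos_of_ne_zero (by rintro rfl; omega)
    refine ⟨a, ha0, by nlinarith, ?_⟩
    rw [show a * (d * b) = d * a * b by ring, Nat.mul_mod_right]
    exact zero_le_one

def lastNum (l m k : ℕ) : ℕ := k * (l - m) % l

section LastNum

variable {l m k : ℕ}

theorem lastNum_eq_sub (hm : 0 < m) (hk : 0 < k) (h : m * k ≤ l) : lastNum l m k = l - m * k := by
  have hmk : 0 < m * k := Nat.mul_pos hm hk
  have hml : m ≤ l := (Nat.le_mul_of_pos_right m hk).trans h
  have hsplit : k * (l - m) = (l - m * k) + (k - 1) * l := by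
    zify [hml, h, hk]
    ring
  rw [lastNum, hsplit, Nat.add_mul_mod_self_right, Nat.mod_eq_of_lt (by omega)]

theorem mod_le_lastNum_of_add_eq (h : m * k + lastNum l m k = l) : l % m ≤ lastNum l m k :=
  calc l % m = (l - m * k) % m := (Nat.sub_mul_mod (by omega)).symm
    _ ≤ l - m * k := Nat.mod_le _ _
    _ = lastNum l m k := by omega

theorem lastNum_pos_of_mod_eq_one (hml : m ≤ l) (h : l % m = 1) (hk : 0 < k) (hkl : k < l) :
    0 < lastNum l m k := by
  have hcop : Nat.Coprime l (l - m) := (Nat.coprime_self_sub_right hml).mpr <| by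
    rw [Nat.Coprime, Nat.gcd_comm, Nat.gcd_rec, h, Nat.gcd_one_left]
  refine Nat.pos_of_ne_zero fun h0 => ?_
  have hdvd : l ∣ k := hcop.dvd_of_dvd_mul_right (Nat.dvd_of_mod_eq_zero h0)
  exact absurd (Nat.le_of_dvd hk hdvd) (by omega)

end LastNum

def Decomposable (l r : ℕ) (x : Fin r → ℚ) : Prop :=
  ∃ a b : Fin r → ℚ, memN l r a ∧ (∀ i, 0 ≤ a i) ∧ a ≠ 0 ∧
    memN l r b ∧ (∀ i, 0 ≤ b i) ∧ b ≠ 0 ∧ x = a + b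

def hilbertBasis (l r : ℕ) : Set (Fin r → ℚ) :=
  {x | memN l r x ∧ (∀ i, 0 ≤ x i) ∧ x ≠ 0 ∧ ¬ Decomposable l r x}

def juniorPoints (l r : ℕ) : Set (Fin r → ℚ) :=
  {x | memN l r x ∧ (∀ i, 0 ≤ x i) ∧ ∑ i, x i = 1}

def fracPoint (l r k : ℕ) : Fin r → ℚ := fun i => Int.fract (k * wgt l r i)

section Lattice

variable {l r : ℕ}

theorem memN_sub {x y : Fin r → ℚ} (hx : memN l r x) (hy : memN l r y) : memN l r (x - y) := by
  obtain ⟨a, c, rfl⟩ := hx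
  obtain ⟨b, d, rfl⟩ := hy
  exact ⟨a - b, c - d, by ext i; simp [sub_smul]; ring⟩

theorem memN_single (i : Fin r) : memN l r (Pi.single i 1) :=
  ⟨Pi.single i 1, 0, by ext j; rcases eq_or_ne j i with rfl | hj <;> simp [*]⟩

theorem sum_ite_last {M : Type*} [AddCommMonoid M] (hr : 1 ≤ r) (A B : M) :
    ∑ i : Fin r, (if (i : ℕ) + 1 = r then A else B) = A + (r - 1) • B := by
  obtain ⟨n, rfl⟩ : ∃ n, r = n + 1 := ⟨r - 1, by omega⟩
  have hlt : ∀ i : Fin n, (i : ℕ) ≠ n := fun i => i.isLt.ne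
  rw [Fin.sum_univ_castSucc]
  simp [add_comm, hlt]

theorem sum_wgt (hl : 0 < l) (hr : 1 ≤ r) : ∑ i, wgt l r i = 1 := by
  simp only [wgt, ite_div, sum_ite_last hr, nsmul_eq_mul]
  field_simp
  push_cast [Nat.cast_sub hr]
  ring

theorem exists_sum_eq_intCast (hl : 0 < l) (hr : 1 ≤ r) {x : Fin r → ℚ} (hx : memN l r x) :
    ∃ z : ℤ, ∑ i, x i = z := by
  obtain ⟨a, c, rfl⟩ := hx
  refine ⟨∑ i, a i + c, ?_⟩
  simp [Finset.sum_add_distrib, ← Finset.mul_sum, sum_wgt hl hr]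

theorem one_le_sum (hl : 0 < l) (hr : 1 ≤ r) {x : Fin r → ℚ} (hx : memN l r x)
    (h0 : ∀ i, 0 ≤ x i) (hne : x ≠ 0) : 1 ≤ ∑ i, x i := by
  obtain ⟨z, hz⟩ := exists_sum_eq_intCast hl hr hx
  obtain ⟨i, hi⟩ := Function.ne_iff.mp hne
  have hpos : 0 < ∑ i, x i :=
    Finset.sum_pos' (fun j _ => h0 j) ⟨i, Finset.mem_univ i, (h0 i).lt_of_ne' hi⟩
  rw [hz] at hpos ⊢
  exact_mod_cast (Int.cast_pos.mp hpos : 0 < z)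

theorem decomposable_of_one_le_apply {x : Fin r → ℚ} (hx : memN l r x) (h0 : ∀ i, 0 ≤ x i)
    {i : Fin r} (hi : 1 ≤ x i) (hs : ∑ j, x j ≠ 1) : Decomposable l r x := by
  refine ⟨Pi.single i 1, x - Pi.single i 1, memN_single i, fun j => ?_, by simp,
    memN_sub hx (memN_single i), fun j => ?_, sub_ne_zero.mpr ?_, (add_sub_cancel _ _).symm⟩
  · rcases eq_or_ne j i with rfl | hj <;> simp [*]
  · rcases eq_or_ne j i with rfl | hj <;> simp [*, h0 j]
  · rintro rfl
    simp at hs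

end Lattice

section FracPoint

variable {l r : ℕ}

theorem memN_fracPoint (k : ℕ) : memN l r (fracPoint l r k) :=
  ⟨fun i => -⌊(k : ℚ) * wgt l r i⌋, k, by
    ext i
    rw [Pi.add_apply, Pi.smul_apply, zsmul_eq_mul, fracPoint, Int.fract]
    push_cast
    ring⟩

theorem fracPoint_nonneg (k : ℕ) (i : Fin r) : 0 ≤ fracPoint l r k i := Int.fract_nonneg _

theorem fracPoint_lt_one (k : ℕ) (i : Fin r) : fracPoint l r k i < 1 := Int.fract_lt_one _

@[simp]
theorem fracPoint_zero : fracPoint l r 0 = 0 := by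
  ext
  simp [fracPoint]

theorem fracPoint_apply_of_not_last {k : ℕ} (hk : k < l) {i : Fin r} (hi : (i : ℕ) + 1 ≠ r) :
    fracPoint l r k i = k / l := by
  rw [fracPoint, wgt, if_neg hi, mul_one_div, Int.fract_div_natCast_eq_div_natCast_mod,
    Nat.mod_eq_of_lt hk]

theorem fracPoint_apply_last (hl : r ≤ l + 1) (k : ℕ) {i : Fin r} (hi : (i : ℕ) + 1 = r) :
    fracPoint l r k i = lastNum l (r - 1) k / l := by
  have hnum : (k : ℚ) * ((l - (r - 1)) / l) = ((k * (l - (r - 1)) : ℕ) : ℚ) / l := by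
    push_cast [Nat.cast_sub (by omega : 1 ≤ r), Nat.cast_sub (by omega : r - 1 ≤ l)]
    ring
  rw [fracPoint, wgt, if_pos hi, hnum, Int.fract_div_natCast_eq_div_natCast_mod, lastNum]

theorem exists_natCast_mul_wgt_eq_intCast (hl : 0 < l) (i : Fin r) :
    ∃ z : ℤ, (l : ℚ) * wgt l r i = z := by
  refine ⟨if (i : ℕ) + 1 = r then l - (r - 1) else 1, ?_⟩
  split_ifs with hi <;> simp [wgt, hi] <;> field_simp

theorem fract_mul_wgt_emod (hl : 0 < l) (c : ℤ) (i : Fin r) :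
    Int.fract (((c % l : ℤ) : ℚ) * wgt l r i) = Int.fract (c * wgt l r i) := by
  obtain ⟨z, hz⟩ := exists_natCast_mul_wgt_eq_intCast hl i
  have hc : (c : ℚ) * wgt l r i = ((c % l : ℤ) : ℚ) * wgt l r i + ((c / l * z : ℤ) : ℚ) := by
    rw [Int.cast_mul, ← hz]
    conv_lhs => rw [← Int.emod_add_mul_ediv c l]
    push_cast
    ring
  rw [hc, Int.fract_add_intCast]

theorem eq_fracPoint_of_lt_one (hl : 0 < l) {x : Fin r → ℚ} (hx : memN l r x)
    (h0 : ∀ i, 0 ≤ x i) (h1 : ∀ i, x i < 1) : ∃ k < l, x = fracPoint l r k := by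
  obtain ⟨a, c, rfl⟩ := hx
  have hc0 : 0 ≤ c % l := Int.emod_nonneg c (by omega)
  have hcl : c % l < l := Int.emod_lt_of_pos c (by omega)
  refine ⟨(c % l).toNat, by omega, funext fun i => ?_⟩
  calc ((fun i => (a i : ℚ)) + c • wgt l r) i
      = Int.fract ((a i : ℚ) + c * wgt l r i) :=
        (Int.fract_eq_self.mpr ⟨h0 i, h1 i⟩).symm.trans (by simp)
    _ = fracPoint l r (c % l).toNat i := by
        rw [Int.fract_intCast_add, ← fract_mul_wgt_emod hl, fracPoint, ← Int.toNat_of_nonneg hc0]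
        rfl

theorem fracPoint_le_fracPoint_iff (hr : 2 ≤ r) (hl : r ≤ l) {j k : ℕ} (hj : j < l) (hk : k < l) :
    fracPoint l r j ≤ fracPoint l r k ↔ j ≤ k ∧ lastNum l (r - 1) j ≤ lastNum l (r - 1) k := by
  have hlQ : (0 : ℚ) < l := by exact_mod_cast (by omega : 0 < l)
  have coord : ∀ i : Fin r, fracPoint l r j i ≤ fracPoint l r k i ↔
      if (i : ℕ) + 1 = r then lastNum l (r - 1) j ≤ lastNum l (r - 1) k else j ≤ k := by
    intro i
    split_ifs with hi
    · rw [fracPoint_apply_last (by omega) j hi, fracPoint_apply_last (by omega) k hi,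
        div_le_div_iff_of_pos_right hlQ, Nat.cast_le]
    · rw [fracPoint_apply_of_not_last hj hi, fracPoint_apply_of_not_last hk hi,
        div_le_div_iff_of_pos_right hlQ, Nat.cast_le]
  constructor
  · intro h
    have h1 := (coord ⟨0, by omega⟩).mp (h _)
    have h2 := (coord ⟨r - 1, by omega⟩).mp (h _)
    simp only [show 0 + 1 ≠ r by omega, show r - 1 + 1 = r by omega, if_true, if_false] at h1 h2
    exact ⟨h1, h2⟩
  · rintro ⟨h1, h2⟩ i
    exact (coord i).mpr (by split_ifs <;> assumption)

theorem fracPoint_injOn (hr : 2 ≤ r) (hl : r ≤ l) : Set.InjOn (fracPoint l r) (Set.Iio l) :=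
  fun _ hj _ hk h => le_antisymm ((fracPoint_le_fracPoint_iff hr hl hj hk).mp h.le).1
    ((fracPoint_le_fracPoint_iff hr hl hk hj).mp h.ge).1

theorem fracPoint_ne_zero (hr : 2 ≤ r) (hl : r ≤ l) {k : ℕ} (hk0 : 0 < k) (hkl : k < l) :
    fracPoint l r k ≠ 0 := fun h =>
  hk0.ne' (fracPoint_injOn hr hl hkl (show 0 < l by omega) (h.trans fracPoint_zero.symm))

theorem decomposable_fracPoint_iff (hr : 2 ≤ r) (hl : r ≤ l) {k : ℕ} (hk : k < l) :
    Decomposable l r (fracPoint l r k) ↔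
      ∃ j, 0 < j ∧ j < k ∧ lastNum l (r - 1) j ≤ lastNum l (r - 1) k := by
  constructor
  · rintro ⟨a, b, ha, ha0, hane, -, hb0, hbne, hab⟩
    have hle : a ≤ fracPoint l r k := hab ▸ le_add_of_nonneg_right hb0
    obtain ⟨j, hj, rfl⟩ := eq_fracPoint_of_lt_one (by omega) ha ha0
      fun i => (hle i).trans_lt (fracPoint_lt_one k i)
    obtain ⟨hjk, hg⟩ := (fracPoint_le_fracPoint_iff hr hl hj hk).mp hle
    have hj0 : j ≠ 0 := by
      rintro rfl
      exact hane fracPoint_zero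
    have hjk' : j ≠ k := by
      rintro rfl
      exact hbne (by simpa using hab)
    exact ⟨j, by omega, by omega, hg⟩
  · rintro ⟨j, hj0, hjk, hg⟩
    refine ⟨fracPoint l r j, fracPoint l r k - fracPoint l r j, memN_fracPoint j,
      fracPoint_nonneg j, fracPoint_ne_zero hr hl hj0 (hjk.trans hk),
      memN_sub (memN_fracPoint k) (memN_fracPoint j),
      sub_nonneg.mpr ((fracPoint_le_fracPoint_iff hr hl (hjk.trans hk) hk).mpr ⟨hjk.le, hg⟩),
      sub_ne_zero.mpr fun h => hjk.ne (fracPoint_injOn hr hl (hjk.trans hk) hk h.symm),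
      (add_sub_cancel _ _).symm⟩

theorem sum_fracPoint (hr : 1 ≤ r) (hl : r ≤ l + 1) {k : ℕ} (hk : k < l) :
    ∑ i, fracPoint l r k i = (((r - 1) * k + lastNum l (r - 1) k : ℕ) : ℚ) / l := by
  have hcoord : ∀ i : Fin r, fracPoint l r k i =
      if (i : ℕ) + 1 = r then (lastNum l (r - 1) k : ℚ) / l else (k : ℚ) / l := by
    intro i
    split_ifs with hi
    · exact fracPoint_apply_last hl k hi
    · exact fracPoint_apply_of_not_last hk hi
  rw [Finset.sum_congr rfl fun i _ => hcoord i, sum_ite_last hr, nsmul_eq_mul]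
  push_cast
  ring

theorem sum_fracPoint_eq_one_iff (hr : 1 ≤ r) (hl : r ≤ l + 1) {k : ℕ} (hk : k < l) :
    ∑ i, fracPoint l r k i = 1 ↔ (r - 1) * k + lastNum l (r - 1) k = l := by
  rw [sum_fracPoint hr hl hk, div_eq_one_iff_eq (Nat.cast_ne_zero.mpr (by omega)), Nat.cast_inj]

end FracPoint

section HilbertBasis

variable {l r : ℕ}

theorem juniorPoints_subset_hilbertBasis (hl : 0 < l) (hr : 1 ≤ r) :
    juniorPoints l r ⊆ hilbertBasis l r := by
  rintro x ⟨hx, h0, hs⟩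
  refine ⟨hx, h0, ?_, ?_⟩
  · rintro rfl
    simp at hs
  · rintro ⟨a, b, ha, ha0, hane, hb, hb0, hbne, rfl⟩
    have hsa := one_le_sum hl hr ha ha0 hane
    have hsb := one_le_sum hl hr hb hb0 hbne
    simp only [Pi.add_apply, Finset.sum_add_distrib] at hs
    linarith

theorem decomposable_fracPoint_of_mod_le_one (hr : 2 ≤ r) (hl : r ≤ l) (ht : l % (r - 1) ≤ 1)
    {k : ℕ} (hk0 : 0 < k) (hkl : k < l) (hs : ∑ i, fracPoint l r k i ≠ 1) :
    Decomposable l r (fracPoint l r k) := by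
  have hq0 : 0 < l / (r - 1) := Nat.div_pos (by omega) (by omega)
  have hq : (r - 1) * (l / (r - 1)) ≤ l := Nat.mul_div_le l (r - 1)
  have hqk : l / (r - 1) < k := by
    by_contra! hkq
    have hk : (r - 1) * k ≤ l := (Nat.mul_le_mul_left _ hkq).trans hq
    apply hs
    rw [sum_fracPoint_eq_one_iff (by omega) (by omega) hkl, lastNum_eq_sub (by omega) hk0 hk]
    omega
  refine (decomposable_fracPoint_iff hr hl hkl).mpr ⟨l / (r - 1), hq0, hqk, ?_⟩
  rw [lastNum_eq_sub (by omega) hq0 hq, ← Nat.mod_eq_sub_mul_div]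
  obtain h | h : l % (r - 1) = 0 ∨ l % (r - 1) = 1 := by omega
  · rw [h]
    exact Nat.zero_le _
  · rw [h]
    exact lastNum_pos_of_mod_eq_one (by omega) h hk0 hkl

theorem hilbertBasis_subset_juniorPoints (hr : 2 ≤ r) (hl : r ≤ l) (ht : l % (r - 1) ≤ 1) :
    hilbertBasis l r ⊆ juniorPoints l r := by
  rintro x ⟨hx, h0, hne, hind⟩
  refine ⟨hx, h0, ?_⟩
  by_contra hs
  apply hind
  obtain ⟨i, hi⟩ | h1 := em (∃ i, 1 ≤ x i)
  · exact decomposable_of_one_le_apply hx h0 hi hs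
  · obtain ⟨k, hkl, rfl⟩ :=
      eq_fracPoint_of_lt_one (by omega) hx h0 fun i => not_le.mp fun h => h1 ⟨i, h⟩
    have hk0 : k ≠ 0 := by
      rintro rfl
      exact hne fracPoint_zero
    exact decomposable_fracPoint_of_mod_le_one hr hl ht (by omega) hkl hs

theorem exists_mem_hilbertBasis_not_mem_juniorPoints (hr : 2 ≤ r) (hl : r ≤ l)
    (ht : 2 ≤ l % (r - 1)) : ∃ x ∈ hilbertBasis l r, x ∉ juniorPoints l r := by
  have hex : ∃ k, 0 < k ∧ k < l ∧ lastNum l (r - 1) k < l % (r - 1) := by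
    obtain ⟨k, hk0, hkl, hk⟩ := exists_pos_lt_mul_mod_le_one (by omega : 2 ≤ l) (l - (r - 1))
    exact ⟨k, hk0, hkl, by rw [lastNum]; omega⟩
  classical
  obtain ⟨hk0, hkl, hkt⟩ := Nat.find_spec hex
  refine ⟨fracPoint l r (Nat.find hex), ⟨memN_fracPoint _, fracPoint_nonneg _,
    fracPoint_ne_zero hr hl hk0 hkl, ?_⟩, ?_⟩
  · rw [decomposable_fracPoint_iff hr hl hkl]
    rintro ⟨j, hj0, hjk, hg⟩
    exact Nat.find_min hex hjk ⟨hj0, hjk.trans hkl, hg.trans_lt hkt⟩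
  · rintro ⟨-, -, hs⟩
    rw [sum_fracPoint_eq_one_iff (by omega) (by omega) hkl] at hs
    exact absurd (mod_le_lastNum_of_add_eq hs) (by omega)

end HilbertBasis

end CyclicQuotient

open CyclicQuotient in
/-- For the singularity of type `(1/l)(1,…,1,l−(r−1))`, the Hilbert basis of
the positive orthant (w.r.t. the lattice `N`) consists exactly of the lattice
points of the junior simplex if and only if `l ≡ 0` or `l ≡ 1 (mod r−1)`. -/
theorem hilbert_basis_eq_junior_iff (l r : ℕ) (hr : 2 ≤ r) (hl : r ≤ l) :
    ({x : Fin r → ℚ | memN l r x ∧ (∀ i, 0 ≤ x i) ∧ x ≠ 0 ∧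
        ¬ ∃ a b : Fin r → ℚ, memN l r a ∧ (∀ i, 0 ≤ a i) ∧ a ≠ 0 ∧
            memN l r b ∧ (∀ i, 0 ≤ b i) ∧ b ≠ 0 ∧ x = a + b}
      = {x : Fin r → ℚ | memN l r x ∧ (∀ i, 0 ≤ x i) ∧ ∑ i, x i = 1})
    ↔ (l % (r - 1) = 0 ∨ l % (r - 1) = 1) := by
  change hilbertBasis l r = juniorPoints l r ↔ _
  constructor
  · intro h
    by_contra ht
    obtain ⟨x, hxH, hxJ⟩ := exists_mem_hilbertBasis_not_mem_juniorPoints hr hl (by omega)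
    exact hxJ (h ▸ hxH)
  · intro ht
    exact (hilbertBasis_subset_juniorPoints hr hl (by omega)).antisymm
      (juniorPoints_subset_hilbertBasis (by omega) (by omega))
end
end

section
/- (Cohomology dimensions of the crepant resolution of (1/l)(1,…,1,l−(r−1)).) Assume l ≡ 0 (mod r−1) or l ≡ 1 (mod r−1). Then for every integer i, the number of integers j with 0 ≤ j < l and (r−1)·j + [j·(l−(r−1))]_l = i·l equals 1 if i = 0, equals ⌊l/(r−1)⌋ if 1 ≤ i ≤ r−2, equals ⌊(l−1)/(r−1)⌋ if i = r−1, and equals 0 for all other i. (These numbers are the dimensions dim_ℚ H^{2i} of the cohomology of the overlying space of the crepant full resolution.) -/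
/-- **Cohomology dimensions of the crepant resolution of
`(1/l)(1,…,1,l−(r−1))`.**  Assume `l ≡ 0` or `l ≡ 1 (mod r−1)`.  For every
integer `i`, the number of `j ∈ {0,…,l−1}` with
`(r−1)·j + [j·(l−(r−1))]_l = i·l` equals `1` for `i = 0`, `⌊l/(r−1)⌋` for
`1 ≤ i ≤ r−2`, `⌊(l−1)/(r−1)⌋` for `i = r−1`, and `0` otherwise. -/
theorem cohomology_dimensions (l r : ℕ) (hr : 2 ≤ r) (hl : r ≤ l)
    (hres : l % (r - 1) = 0 ∨ l % (r - 1) = 1) (i : ℤ) :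
    (((Finset.range l).filter
        (fun j : ℕ =>
          ((r : ℤ) - 1) * (j : ℤ)
            + ((j : ℤ) * ((l : ℤ) - ((r : ℤ) - 1))) % (l : ℤ) = i * (l : ℤ))).card : ℤ)
      = if i = 0 then 1
        else if 1 ≤ i ∧ i ≤ (r : ℤ) - 2 then ((l / (r - 1) : ℕ) : ℤ)
        else if i = (r : ℤ) - 1 then (((l - 1) / (r - 1) : ℕ) : ℤ)
        else 0 := by
  have hs1 : 1 ≤ r - 1 := by omega
  set s := r - 1 with hsdef
  have hl0 : 0 < l := by omega
  have hL0 : (0:ℤ) < (l:ℤ) := by exact_mod_cast hl0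
  have hcast : ((s:ℤ)) = (r:ℤ) - 1 := by omega
  have key : ∀ j ∈ Finset.range l,
      (((r:ℤ)-1) * (j:ℤ) + ((j:ℤ) * ((l:ℤ) - ((r:ℤ)-1))) % (l:ℤ) = i * (l:ℤ))
      ↔ ((i-1) * (l:ℤ) < (s:ℤ) * (j:ℤ) ∧ (s:ℤ) * (j:ℤ) ≤ i * (l:ℤ)) := by
    intro j _
    rw [← hcast]
    have h1 : ((j:ℤ) * ((l:ℤ) - (s:ℤ))) % (l:ℤ) = (-((s:ℤ) * j)) % (l:ℤ) := by
      have h2 : (j:ℤ) * ((l:ℤ) - (s:ℤ)) = -((s:ℤ)*j) + (l:ℤ) * j := by ring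
      rw [h2, Int.add_mul_emod_self_left]
    rw [h1]
    constructor
    · intro h
      have hm0 : 0 ≤ (-((s:ℤ)*j)) % (l:ℤ) := Int.emod_nonneg _ (by omega)
      have hmL : (-((s:ℤ)*j)) % (l:ℤ) < l := Int.emod_lt_of_pos _ hL0
      constructor <;> nlinarith
    · rintro ⟨ha, hb⟩
      have e1 : (-((s:ℤ)*j)) % (l:ℤ) = (i * l - (s:ℤ)*j) % (l:ℤ) := by
        have h2 : i * (l:ℤ) - (s:ℤ)*j = -((s:ℤ)*j) + (l:ℤ) * i := by ring
        rw [h2, Int.add_mul_emod_self_left]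
      rw [e1, Int.emod_eq_of_lt (by linarith) (by nlinarith)]
      ring
  rw [Finset.filter_congr key]
  rcases lt_trichotomy i 0 with hi | hi | hi
  · -- i < 0 : empty
    rw [Finset.filter_false_of_mem, Finset.card_empty]
    · rw [if_neg (by omega), if_neg (by omega), if_neg (by omega)]
      norm_num
    · rintro j hj ⟨h1, h2⟩
      have hj0 : (0:ℤ) ≤ (s:ℤ) * j := by positivity
      nlinarith
  · -- i = 0
    subst hi
    have hfil : Finset.filter
        (fun j : ℕ => ((0:ℤ)-1) * (l:ℤ) < (s:ℤ) * (j:ℤ) ∧ (s:ℤ) * (j:ℤ) ≤ 0 * (l:ℤ))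
        (Finset.range l) = {0} := by
      ext j
      simp only [Finset.mem_filter, Finset.mem_range, Finset.mem_singleton]
      constructor
      · rintro ⟨hjl, h1, h2⟩
        by_contra hne
        have hj1 : (1:ℤ) ≤ (j:ℤ) := by
          have : 1 ≤ j := by omega
          exact_mod_cast this
        have hs1' : (1:ℤ) ≤ (s:ℤ) := by exact_mod_cast hs1
        nlinarith
      · rintro rfl
        refine ⟨hl0, ?_, by norm_num⟩
        push_cast
        linarith
    rw [hfil]
    norm_num
  · -- 0 < i
    set I := i.toNat with hIdef
    have hI : (I:ℤ) = i := Int.toNat_of_nonneg (by omega)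
    have hI1 : 1 ≤ I := by omega
    set q := l / s with hqdef
    set e := l % s with hedef
    have hqe : s * q + e = l := Nat.div_add_mod l s
    have he01 : e = 0 ∨ e = 1 := hres
    have he1 : e ≤ 1 := by omega
    have hq1 : 1 ≤ q := by
      rcases Nat.eq_zero_or_pos q with h | h
      · rw [h, Nat.mul_zero, Nat.zero_add] at hqe; omega
      · exact h
    have hdiv : ∀ k : ℕ, k * e < s → k * l / s = k * q := by
      intro k hk
      have hkl : k * l = k * e + (k * q) * s := by rw [← hqe]; ring
      rw [hkl, Nat.add_mul_div_right _ _ (show 0 < s by omega),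
        Nat.div_eq_of_lt hk, Nat.zero_add]
    rcases le_or_gt I s with hIs | hIs
    · -- 1 ≤ I ≤ s
      have key2 : ∀ j ∈ Finset.range l,
          ((i-1) * (l:ℤ) < (s:ℤ) * (j:ℤ) ∧ (s:ℤ) * (j:ℤ) ≤ i * (l:ℤ))
          ↔ ((I-1)*l < s*j ∧ s*j ≤ I*l) := by
        intro j _
        rw [← hI]
        constructor
        · rintro ⟨h1, h2⟩
          constructor
          · zify [hI1]
            linarith
          · zify
            linarith
        · rintro ⟨h1, h2⟩
          zify [hI1] at h1
          zify at h2
          constructor <;> linarith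
      rw [Finset.filter_congr key2]
      have hIco : Finset.filter (fun j : ℕ => (I-1)*l < s*j ∧ s*j ≤ I*l) (Finset.range l)
          = Finset.Ico ((I-1)*l/s + 1) (min (I*l/s + 1) l) := by
        ext j
        simp only [Finset.mem_filter, Finset.mem_range, Finset.mem_Ico, lt_min_iff]
        have e1 : ((I-1)*l/s + 1 ≤ j) ↔ (I-1)*l < s*j := by
          rw [Nat.add_one_le_iff, Nat.div_lt_iff_lt_mul (show 0 < s by omega), mul_comm j s]
        have e2 : (j < I*l/s + 1) ↔ s*j ≤ I*l := by
          rw [Nat.lt_add_one_iff, Nat.le_div_iff_mul_le (show 0 < s by omega), mul_comm j s]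
        rw [e1, e2]
        tauto
      rw [hIco, Nat.card_Ico]
      have h5 : (I-1)*q + q = I*q := by
        have h6 : (I-1+1)*q = I*q := by rw [Nat.sub_add_cancel hI1]
        rw [← h6]; ring
      rcases lt_or_eq_of_le hIs with hIlt | hIeq
      · -- 1 ≤ I < s  (middle branch)
        have hA : (I-1)*l/s = (I-1)*q := by
          apply hdiv
          have h7 : (I-1)*e ≤ I-1 := by simpa using Nat.mul_le_mul_left (I-1) he1
          exact lt_of_le_of_lt h7 (by omega)
        have hB : I*l/s = I*q := by
          apply hdiv
          have h7 : I*e ≤ I := by simpa using Nat.mul_le_mul_left I he1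
          exact lt_of_le_of_lt h7 (by omega)
        have hBl : I*q + 1 ≤ l := by
          have h7 : (I+1)*q ≤ s*q := Nat.mul_le_mul_right q (by omega)
          have h8 : (I+1)*q = I*q + q := by ring
          generalize hX : (I+1)*q = X at h7 h8
          generalize hY : s*q = Y at h7 hqe
          generalize hZ : I*q = Z at h8 ⊢
          omega
        rw [hA, hB, min_eq_left hBl]
        rw [if_neg (by omega), if_pos ⟨by omega, by omega⟩]
        have h9 : I*q + 1 - ((I-1)*q + 1) = q := by
          generalize hX : (I-1)*q = X at h5
          generalize hY : I*q = Y at h5 ⊢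
          omega
        rw [h9]
      · -- I = s  (third branch)
        have hA : (I-1)*l/s = (I-1)*q := by
          apply hdiv
          have h7 : (I-1)*e ≤ I-1 := by simpa using Nat.mul_le_mul_left (I-1) he1
          exact lt_of_le_of_lt h7 (by omega)
        have hB : I*l/s = l := by
          rw [hIeq, mul_comm s l, Nat.mul_div_cancel _ (show 0 < s by omega)]
        rw [hA, hB, min_eq_right (by omega)]
        rw [if_neg (by omega), if_neg (by omega), if_pos (by omega)]
        have hlq : (l - 1) / s = q + e - 1 := by
          rcases he01 with he0 | he0
          · -- e = 0 : l = s*q, (l-1)/s = q-1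
            have hc : (s - 1) + (q - 1) * s + 1 = s * q := by
              obtain ⟨q', hq'⟩ : ∃ q', q = q' + 1 := ⟨q - 1, by omega⟩
              rw [hq', Nat.add_sub_cancel]
              have hss : s - 1 + 1 = s := by omega
              calc (s - 1) + q' * s + 1 = (s - 1 + 1) + q' * s := by ring
                _ = s + q' * s := by rw [hss]
                _ = s * (q' + 1) := by ring
            have hl1 : l - 1 = (s - 1) + (q - 1) * s := by
              generalize hX : (s - 1) + (q - 1) * s = X at hc ⊢
              generalize hY : s * q = Y at hc hqe
              omega
            rw [hl1, Nat.add_mul_div_right _ _ (show 0 < s by omega),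
              Nat.div_eq_of_lt (by omega)]
            omega
          · -- e = 1 : l - 1 = s*q
            have hl1 : l - 1 = q * s := by
              generalize hX : s * q = X at hqe
              rw [mul_comm q s, hX]
              omega
            rw [hl1, Nat.mul_div_cancel _ (show 0 < s by omega)]
            omega
        rw [hlq]
        have hIq : I * q = s * q := by rw [hIeq]
        have h9 : l - ((I-1)*q + 1) = q + e - 1 := by
          generalize hX : (I-1)*q = X at h5
          generalize hY : I*q = Y at h5 hIq ⊢
          generalize hZ : s*q = Z at hIq hqe
          omega
        rw [h9]
    · -- s < I : empty
      rw [Finset.filter_false_of_mem, Finset.card_empty]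
      · rw [if_neg (by omega), if_neg (by omega), if_neg (by omega)]
        norm_num
      · rintro j hj ⟨h1, h2⟩
        simp only [Finset.mem_range] at hj
        have hjl : (j:ℤ) ≤ (l:ℤ) - 1 := by
          have : j ≤ l - 1 := by omega
          omega
        have hs1' : (1:ℤ) ≤ (s:ℤ) := by exact_mod_cast hs1
        have hsi : (s:ℤ) ≤ i - 1 := by omega
        have e1 : (s:ℤ)*j ≤ (s:ℤ)*((l:ℤ)-1) :=
          mul_le_mul_of_nonneg_left hjl (by linarith)
        nlinarith [mul_nonneg (show (0:ℤ) ≤ i - 1 - s by linarith) (le_of_lt hL0)]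
end

section
/- (Lattice-point counts giving the cohomology dimensions in dimension 3.) One has #{j ∈ ℤ : 0 ≤ j < l and [j·α_1]_l + [j·α_2]_l + [j·α_3]_l = l} = (l + gcd(α_1,l) + gcd(α_2,l) + gcd(α_3,l))/2 − 2 and #{j ∈ ℤ : 0 ≤ j < l and [j·α_1]_l + [j·α_2]_l + [j·α_3]_l = 2l} = (l − gcd(α_1,l) − gcd(α_2,l) − gcd(α_3,l))/2 + 1. (These numbers are dim_ℚ H² and dim_ℚ H⁴ of the overlying space of any crepant full resolution of the singularity of type (1/l)(α_1,α_2,α_3).) -/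
private lemma eq_l_of_dvd (l s : ℕ) (hl : 0 < l) (hd : l ∣ s) (h0 : s ≠ 0)
    (h2 : s < 2 * l) : s = l := by
  obtain ⟨k, rfl⟩ := hd
  rcases k with _ | _ | k
  · simp at h0
  · simp
  · exfalso
    have : l * (k + 1 + 1) = l * k + l + l := by ring
    omega

private lemma mem3_of_dvd (l s : ℕ) (hd : l ∣ s) (h3 : s < 3 * l) :
    s = 0 ∨ s = l ∨ s = 2 * l := by
  obtain ⟨k, rfl⟩ := hd
  rcases k with _ | _ | _ | k
  · left; simp
  · right; left; simp
  · right; right; ring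
  · exfalso
    have : l * (k + 1 + 1 + 1) = l * k + l + l + l := by ring
    omega

private lemma count_mult (l a : ℕ) (hl : 0 < l) :
    ((Finset.range l).filter (fun j => j * a % l = 0)).card = Nat.gcd a l := by
  have hg : 0 < Nat.gcd a l := Nat.gcd_pos_of_pos_right a hl
  have hd0' : 0 < l / Nat.gcd a l :=
    Nat.div_pos (Nat.le_of_dvd hl (Nat.gcd_dvd_right a l)) hg
  have hdl : l / Nat.gcd a l * Nat.gcd a l = l := Nat.div_mul_cancel (Nat.gcd_dvd_right a l)
  set g := Nat.gcd a l with hgdef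
  set d := l / g with hddef
  have hd0 : 0 < d := hd0'
  have hcop : Nat.Coprime d (a / g) := (Nat.coprime_div_gcd_div_gcd hg).symm
  have ha : g * (a / g) = a := Nat.mul_div_cancel' (Nat.gcd_dvd_left a l)
  have key : ∀ j, (j * a % l = 0 ↔ d ∣ j) := by
    intro j
    constructor
    · intro h
      have h1 : l ∣ j * a := Nat.dvd_of_mod_eq_zero h
      have h2 : d * g ∣ j * (a / g) * g := by
        have he : j * (a / g) * g = j * a := by
          rw [mul_assoc, mul_comm (a / g) g, ha]
        rw [he, hdl]
        exact h1
      exact hcop.dvd_of_dvd_mul_right ((Nat.mul_dvd_mul_iff_right hg).mp h2)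
    · rintro ⟨m, rfl⟩
      have h1 : d * g ∣ d * a := mul_dvd_mul_left d (Nat.gcd_dvd_left a l)
      have h2 : d * g ∣ d * m * a := by
        have := h1.mul_right m
        rwa [show d * a * m = d * m * a by ring] at this
      obtain ⟨c, hc⟩ := h2
      have he : d * m * a = l * c := by rw [hc, hdl]
      rw [he]
      exact Nat.mul_mod_right _ _
  have himg : (Finset.range l).filter (fun j => j * a % l = 0)
      = (Finset.range g).image (· * d) := by
    ext j
    simp only [Finset.mem_filter, Finset.mem_range, Finset.mem_image, key]
    constructor
    · rintro ⟨hjl, m, rfl⟩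
      refine ⟨m, ?_, by ring⟩
      have : d * m < d * g := by rw [hdl]; exact hjl
      exact lt_of_mul_lt_mul_left this (Nat.zero_le d)
    · rintro ⟨m, hm, rfl⟩
      constructor
      · calc m * d < g * d := (Nat.mul_lt_mul_right hd0).mpr hm
          _ = l := by rw [mul_comm]; exact hdl
      · exact ⟨m, by ring⟩
  rw [himg, Finset.card_image_of_injective _ (fun x y h => Nat.eq_of_mul_eq_mul_right hd0 h),
    Finset.card_range]

/-- **Lattice-point counts giving the cohomology dimensions in dimension 3.**
For a 3-dimensional Gorenstein cyclic quotient singularity of type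
`(1/l)(α 0, α 1, α 2)`:
`#{0 ≤ j < l : [jα0]_l + [jα1]_l + [jα2]_l = l} = (l + Σ gcd(αᵢ,l))/2 − 2` and
`#{0 ≤ j < l : [jα0]_l + [jα1]_l + [jα2]_l = 2l} = (l − Σ gcd(αᵢ,l))/2 + 1`. -/
theorem dim3_cohomology_counts (l : ℕ) (hl : 2 ≤ l) (α : Fin 3 → ℕ)
    (hαlt : ∀ i, α i ≤ l - 1)
    (hpair : ∀ i j : Fin 3, i ≠ j → Nat.gcd l (Nat.gcd (α i) (α j)) = 1)
    (hsum : (α 0 + α 1 + α 2) % l = 0) :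
    ((((Finset.range l).filter
        (fun j => (j * α 0) % l + (j * α 1) % l + (j * α 2) % l = l)).card : ℚ)
      = ((l : ℚ) + (Nat.gcd (α 0) l : ℚ) + (Nat.gcd (α 1) l : ℚ)
          + (Nat.gcd (α 2) l : ℚ)) / 2 - 2) ∧
    ((((Finset.range l).filter
        (fun j => (j * α 0) % l + (j * α 1) % l + (j * α 2) % l = 2 * l)).card : ℚ)
      = ((l : ℚ) - (Nat.gcd (α 0) l : ℚ) - (Nat.gcd (α 1) l : ℚ)
          - (Nat.gcd (α 2) l : ℚ)) / 2 + 1) := by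
  classical
  have hl0 : 0 < l := by omega
  set A := (Finset.range l).filter
      (fun j => (j * α 0) % l + (j * α 1) % l + (j * α 2) % l = l) with hA
  set B := (Finset.range l).filter
      (fun j => (j * α 0) % l + (j * α 1) % l + (j * α 2) % l = 2 * l) with hB
  have hflt : ∀ (i : Fin 3) (j : ℕ), j * α i % l < l := fun i j => Nat.mod_lt _ hl0
  have hSdvd : ∀ j : ℕ, l ∣ (j * α 0 % l + j * α 1 % l + j * α 2 % l) := by
    intro j
    have h1 : (j * α 0 % l + j * α 1 % l + j * α 2 % l) ≡ j * α 0 + j * α 1 + j * α 2 [MOD l] :=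
      ((Nat.mod_modEq _ _).add (Nat.mod_modEq _ _)).add (Nat.mod_modEq _ _)
    have h2 : j * α 0 + j * α 1 + j * α 2 = j * (α 0 + α 1 + α 2) := by ring
    have h3 : (α 0 + α 1 + α 2) ≡ 0 [MOD l] := by
      simpa [Nat.ModEq] using hsum
    have h4 : j * (α 0 + α 1 + α 2) ≡ 0 [MOD l] := by
      simpa using h3.mul_left j
    refine Nat.modEq_zero_iff_dvd.mp ?_
    calc (j * α 0 % l + j * α 1 % l + j * α 2 % l)
        ≡ j * α 0 + j * α 1 + j * α 2 [MOD l] := h1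
      _ = j * (α 0 + α 1 + α 2) := h2
      _ ≡ 0 [MOD l] := h4
  have huniq : ∀ j, j < l → ∀ i i' : Fin 3, i ≠ i' → l ∣ j * α i → l ∣ j * α i' → j = 0 := by
    intro j hj i i' hne h1 h2
    have hg : l ∣ j * Nat.gcd (α i) (α i') := by
      have h3 := Nat.dvd_gcd h1 h2
      rwa [Nat.gcd_mul_left] at h3
    have hcop : Nat.Coprime l (Nat.gcd (α i) (α i')) := hpair i i' hne
    exact Nat.eq_zero_of_dvd_of_lt (hcop.dvd_of_dvd_mul_right hg) hj
  have hone : ∀ j, j < l → j ≠ 0 → ∀ i : Fin 3, l ∣ j * α i →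
      j * α 0 % l + j * α 1 % l + j * α 2 % l = l := by
    intro j hjl hj0 i hi
    have ht0 := hflt 0 j
    have ht1 := hflt 1 j
    have ht2 := hflt 2 j
    have hi0 : j * α i % l = 0 := by
      obtain ⟨c, hc⟩ := hi
      rw [hc]; exact Nat.mul_mod_right _ _
    have hothers : ∀ i' : Fin 3, i' ≠ i → j * α i' % l ≠ 0 := by
      intro i' hne h
      exact hj0 (huniq j hjl i i' (Ne.symm hne) hi (Nat.dvd_of_mod_eq_zero h))
    refine eq_l_of_dvd l _ hl0 (hSdvd j) ?_ ?_
    · fin_cases i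
      · have := hothers 1 (by decide); omega
      · have := hothers 0 (by decide); omega
      · have := hothers 0 (by decide); omega
    · fin_cases i
      · have hz : j * α 0 % l = 0 := hi0
        omega
      · have hz : j * α 1 % l = 0 := hi0
        omega
      · have hz : j * α 2 % l = 0 := hi0
        omega
  have hS0 : 0 * α 0 % l + 0 * α 1 % l + 0 * α 2 % l = 0 := by simp
  -- Step 1: A.card + B.card + 1 = l
  have hABdisj : Disjoint A B := by
    rw [Finset.disjoint_left]
    intro j hjA hjB
    rw [hA, Finset.mem_filter] at hjA
    rw [hB, Finset.mem_filter] at hjB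
    omega
  have hunion : A ∪ B = (Finset.range l).erase 0 := by
    ext j
    simp only [hA, hB, Finset.mem_union, Finset.mem_filter, Finset.mem_erase, Finset.mem_range]
    constructor
    · rintro (⟨hj, hS⟩ | ⟨hj, hS⟩) <;>
      · refine ⟨?_, hj⟩
        rintro rfl
        omega
    · rintro ⟨hj0, hjl⟩
      have h3 : j * α 0 % l + j * α 1 % l + j * α 2 % l < 3 * l := by
        have := hflt 0 j; have := hflt 1 j; have := hflt 2 j; omega
      rcases mem3_of_dvd l _ (hSdvd j) h3 with h | h | h
      · exfalso
        have h0 : j * α 0 % l = 0 := by omega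
        have h1 : j * α 1 % l = 0 := by omega
        exact hj0 (huniq j hjl 0 1 (by decide) (Nat.dvd_of_mod_eq_zero h0)
          (Nat.dvd_of_mod_eq_zero h1))
      · exact Or.inl ⟨hjl, h⟩
      · exact Or.inr ⟨hjl, h⟩
  have hcard1 : A.card + B.card + 1 = l := by
    have hu := Finset.card_union_of_disjoint hABdisj
    rw [hunion, Finset.card_erase_of_mem (Finset.mem_range.mpr hl0), Finset.card_range] at hu
    omega
  -- Step 2: the set D of nonzero j with some l ∣ j * α i
  set D : Finset ℕ := (((Finset.range l).filter (fun j => j * α 0 % l = 0)).erase 0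
    ∪ ((Finset.range l).filter (fun j => j * α 1 % l = 0)).erase 0)
    ∪ ((Finset.range l).filter (fun j => j * α 2 % l = 0)).erase 0 with hD
  have hdisj : ∀ i i' : Fin 3, i ≠ i' →
      Disjoint (((Finset.range l).filter (fun j => j * α i % l = 0)).erase 0)
        (((Finset.range l).filter (fun j => j * α i' % l = 0)).erase 0) := by
    intro i i' hne
    rw [Finset.disjoint_left]
    intro j hj1 hj2
    simp only [Finset.mem_erase, Finset.mem_filter, Finset.mem_range] at hj1 hj2
    exact hj1.1 (huniq j hj1.2.1 i i' hne (Nat.dvd_of_mod_eq_zero hj1.2.2)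
      (Nat.dvd_of_mod_eq_zero hj2.2.2))
  have hci : ∀ i : Fin 3, (((Finset.range l).filter (fun j => j * α i % l = 0)).erase 0).card
      = Nat.gcd (α i) l - 1 := by
    intro i
    rw [Finset.card_erase_of_mem, count_mult l (α i) hl0]
    exact Finset.mem_filter.mpr ⟨Finset.mem_range.mpr hl0, by simp⟩
  have hgpos : ∀ i : Fin 3, 0 < Nat.gcd (α i) l := fun i => Nat.gcd_pos_of_pos_right _ hl0
  have hDcard : D.card + 3 = Nat.gcd (α 0) l + Nat.gcd (α 1) l + Nat.gcd (α 2) l := by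
    have hd2 : Disjoint (((Finset.range l).filter (fun j => j * α 0 % l = 0)).erase 0
        ∪ ((Finset.range l).filter (fun j => j * α 1 % l = 0)).erase 0)
        (((Finset.range l).filter (fun j => j * α 2 % l = 0)).erase 0) :=
      Finset.disjoint_union_left.mpr ⟨hdisj 0 2 (by decide), hdisj 1 2 (by decide)⟩
    rw [hD, Finset.card_union_of_disjoint hd2,
      Finset.card_union_of_disjoint (hdisj 0 1 (by decide)), hci 0, hci 1, hci 2]
    have := hgpos 0; have := hgpos 1; have := hgpos 2
    omega
  -- Step 3: D ⊆ A
  have hDA : D ⊆ A := by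
    intro j hj
    simp only [hD, Finset.mem_union, Finset.mem_erase, Finset.mem_filter, Finset.mem_range] at hj
    have hj0 : j ≠ 0 := by rcases hj with (⟨h, _⟩ | ⟨h, _⟩) | ⟨h, _⟩ <;> exact h
    have hjl : j < l := by rcases hj with (⟨_, h, _⟩ | ⟨_, h, _⟩) | ⟨_, h, _⟩ <;> exact h
    have hex : ∃ i : Fin 3, l ∣ j * α i := by
      rcases hj with (⟨_, _, h⟩ | ⟨_, _, h⟩) | ⟨_, _, h⟩
      exacts [⟨0, Nat.dvd_of_mod_eq_zero h⟩, ⟨1, Nat.dvd_of_mod_eq_zero h⟩,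
        ⟨2, Nat.dvd_of_mod_eq_zero h⟩]
    obtain ⟨i, hi⟩ := hex
    rw [hA, Finset.mem_filter]
    exact ⟨Finset.mem_range.mpr hjl, hone j hjl hj0 i hi⟩
  -- B members have no divisible index
  have hBnd : ∀ j, j < l → (j * α 0 % l + j * α 1 % l + j * α 2 % l = 2 * l) →
      ∀ i : Fin 3, ¬ l ∣ j * α i := by
    intro j hjl hS i hdvd
    have hj0 : j ≠ 0 := by rintro rfl; omega
    have := hone j hjl hj0 i hdvd
    omega
  -- pair sums
  have hpairsum : ∀ (i : Fin 3) (j : ℕ), j ≠ 0 → j < l → ¬ l ∣ j * α i →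
      j * α i % l + (l - j) * α i % l = l := by
    intro i j hj0 hjl hnd
    have hkey : j * α i + (l - j) * α i = l * α i := by
      have h : j + (l - j) = l := by omega
      calc j * α i + (l - j) * α i = (j + (l - j)) * α i := by ring
        _ = l * α i := by rw [h]
    have h1 : j * α i % l ≠ 0 := fun h => hnd (Nat.dvd_of_mod_eq_zero h)
    have h2 : l ∣ (j * α i % l + (l - j) * α i % l) := by
      refine Nat.modEq_zero_iff_dvd.mp ?_
      calc (j * α i % l + (l - j) * α i % l)
          ≡ j * α i + (l - j) * α i [MOD l] := (Nat.mod_modEq _ _).add (Nat.mod_modEq _ _)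
        _ = l * α i := hkey
        _ ≡ 0 [MOD l] := Nat.modEq_zero_iff_dvd.mpr ⟨α i, rfl⟩
    have h3 : (l - j) * α i % l ≠ 0 := by
      intro h
      have hd1 : l ∣ (l - j) * α i := Nat.dvd_of_mod_eq_zero h
      have hd2 : l ∣ l * α i := ⟨α i, rfl⟩
      have heq : j * α i = l * α i - (l - j) * α i := by omega
      rw [heq] at hnd
      exact hnd (Nat.dvd_sub hd2 hd1)
    have := hflt i j
    have := hflt i (l - j)
    refine eq_l_of_dvd l _ hl0 h2 (by omega) (by omega)
  have hflip : ∀ j, j ≠ 0 → j < l → (∀ i : Fin 3, ¬ l ∣ j * α i) →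
      (j * α 0 % l + j * α 1 % l + j * α 2 % l)
        + ((l - j) * α 0 % l + (l - j) * α 1 % l + (l - j) * α 2 % l) = 3 * l := by
    intro j h0 hjl hnd
    have e0 := hpairsum 0 j h0 hjl (hnd 0)
    have e1 := hpairsum 1 j h0 hjl (hnd 1)
    have e2 := hpairsum 2 j h0 hjl (hnd 2)
    omega
  -- Step 4: bijection between B and A \ D
  have hbij : B.card = (A \ D).card := by
    refine Finset.card_bij' (fun j _ => l - j) (fun k _ => l - k) ?_ ?_ ?_ ?_
    · intro j hjB
      rw [hB, Finset.mem_filter, Finset.mem_range] at hjB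
      obtain ⟨hjl, hS⟩ := hjB
      have hj0 : j ≠ 0 := by rintro rfl; omega
      have hnd : ∀ i : Fin 3, ¬ l ∣ j * α i := hBnd j hjl hS
      have hfl := hflip j hj0 hjl hnd
      rw [Finset.mem_sdiff]
      constructor
      · rw [hA, Finset.mem_filter, Finset.mem_range]
        exact ⟨by omega, by omega⟩
      · intro hmem
        simp only [hD, Finset.mem_union, Finset.mem_erase, Finset.mem_filter,
          Finset.mem_range] at hmem
        have hex : ∃ i : Fin 3, l ∣ (l - j) * α i := by
          rcases hmem with (⟨_, _, h⟩ | ⟨_, _, h⟩) | ⟨_, _, h⟩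
          exacts [⟨0, Nat.dvd_of_mod_eq_zero h⟩, ⟨1, Nat.dvd_of_mod_eq_zero h⟩,
            ⟨2, Nat.dvd_of_mod_eq_zero h⟩]
        obtain ⟨i, hi⟩ := hex
        have hd2 : l ∣ l * α i := ⟨α i, rfl⟩
        have hkey : j * α i + (l - j) * α i = l * α i := by
          have h : j + (l - j) = l := by omega
          calc j * α i + (l - j) * α i = (j + (l - j)) * α i := by ring
            _ = l * α i := by rw [h]
        have heq : j * α i = l * α i - (l - j) * α i := by omega
        exact hnd i (heq ▸ Nat.dvd_sub hd2 hi)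
    · intro k hk
      rw [Finset.mem_sdiff] at hk
      obtain ⟨hkA, hkD⟩ := hk
      rw [hA, Finset.mem_filter, Finset.mem_range] at hkA
      obtain ⟨hkl, hS⟩ := hkA
      have hk0 : k ≠ 0 := by rintro rfl; omega
      have hnd : ∀ i : Fin 3, ¬ l ∣ k * α i := by
        intro i hi
        apply hkD
        have hmem : k ∈ (((Finset.range l).filter (fun j => j * α i % l = 0)).erase 0) := by
          simp only [Finset.mem_erase, Finset.mem_filter, Finset.mem_range]
          refine ⟨hk0, hkl, ?_⟩
          obtain ⟨c, hc⟩ := hi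
          rw [hc]; exact Nat.mul_mod_right _ _
        rw [hD]
        fin_cases i
        · exact Finset.mem_union_left _ (Finset.mem_union_left _ hmem)
        · exact Finset.mem_union_left _ (Finset.mem_union_right _ hmem)
        · exact Finset.mem_union_right _ hmem
      have hfl := hflip k hk0 hkl hnd
      rw [hB, Finset.mem_filter, Finset.mem_range]
      exact ⟨by omega, by omega⟩
    · intro j hjB
      rw [hB, Finset.mem_filter, Finset.mem_range] at hjB
      omega
    · intro k hk
      rw [Finset.mem_sdiff, hA, Finset.mem_filter, Finset.mem_range] at hk
      omega
  have hcard2 : (A \ D).card + D.card = A.card := Finset.card_sdiff_add_card_eq_card hDA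
  -- finish
  have h2A : 2 * A.card + 4
      = l + (Nat.gcd (α 0) l + Nat.gcd (α 1) l + Nat.gcd (α 2) l) := by omega
  have h2B : 2 * B.card + (Nat.gcd (α 0) l + Nat.gcd (α 1) l + Nat.gcd (α 2) l)
      = l + 2 := by omega
  constructor
  · have := congrArg (Nat.cast : ℕ → ℚ) h2A
    push_cast at this
    linarith
  · have := congrArg (Nat.cast : ℕ → ℚ) h2B
    push_cast at this
    linarith
end
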